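/- arXiv:2103.05234 — 9 statements merged into one kernel-verified Lean document; each statement's English description precedes it below -/
import Mathlib

section
/- For a finite group G, the number β_{G,n} of orbits of G acting by simultaneous conjugation on the set of commuting n-tuples satisfies the recursion β_{G,n} = Σ_H c_H · β_{H,n−1}, where the sum is over (isomorphism classes of) centralizers H of elements of G, and c_H is the number of conjugacy classes of G whose elements have centralizer isomorphic to H. -/
/-- The simultaneous conjugation relation on `n`-tuples of elements of `G`. -/
def simulConjRel (G : Type*) [Group G] (n : ℕ) (x y : Fin n → G) : Prop :=
  ∃ g : G, ∀ i, g * x i * g⁻¹ = y i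

/-- `α_{G,n}`: the number of orbits of `G` acting on `Gⁿ` by simultaneous conjugation. -/
noncomputable def alphaCount (G : Type*) [Group G] (n : ℕ) : ℕ :=
  Nat.card (Quot (simulConjRel G n))

/-- Commuting `n`-tuples in `G`. -/
def CommTuple (G : Type*) [Group G] (n : ℕ) :=
  {x : Fin n → G // ∀ i j, Commute (x i) (x j)}

/-- `β_{G,n}`: the number of orbits of `G` acting on commuting `n`-tuples by
simultaneous conjugation. -/
noncomputable def betaCount (G : Type*) [Group G] (n : ℕ) : ℕ :=
  Nat.card (Quot (fun x y : CommTuple G n => simulConjRel G n x.1 y.1))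

/-! ### Auxiliary lemmas -/

section Aux

variable {G : Type*} [Group G] {n : ℕ}

instance (G : Type*) [Group G] [Finite G] (n : ℕ) : Finite (CommTuple G n) := by
  unfold CommTuple; infer_instance

lemma ctRel_equiv (G : Type*) [Group G] (n : ℕ) :
    Equivalence (fun x y : CommTuple G n => simulConjRel G n x.1 y.1) := by
  constructor
  · intro x; exact ⟨1, fun i => by simp⟩
  · rintro x y ⟨g, hg⟩
    refine ⟨g⁻¹, fun i => ?_⟩
    rw [← hg i]; group
  · rintro x y z ⟨g, hg⟩ ⟨h, hh⟩
    refine ⟨h * g, fun i => ?_⟩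
    rw [← hh i, ← hg i]; group

lemma ct_mk_eq {x y : CommTuple G n} :
    Quot.mk (fun x y : CommTuple G n => simulConjRel G n x.1 y.1) x =
      Quot.mk (fun x y : CommTuple G n => simulConjRel G n x.1 y.1) y ↔
      simulConjRel G n x.1 y.1 := by
  rw [Quot.eq]
  exact (ctRel_equiv G n).eqvGen_iff

lemma beta_congr {G H : Type*} [Group G] [Group H] (e : G ≃* H) (n : ℕ) :
    betaCount G n = betaCount H n := by
  apply Nat.card_congr
  refine Quot.congr ⟨fun x => ⟨fun i => e (x.1 i), fun i j => (x.2 i j).map e⟩,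
    fun x => ⟨fun i => e.symm (x.1 i), fun i j => (x.2 i j).map e.symm⟩,
    fun x => Subtype.ext (funext fun i => e.symm_apply_apply _),
    fun x => Subtype.ext (funext fun i => e.apply_symm_apply _)⟩ ?_
  rintro ⟨x, hx⟩ ⟨y, hy⟩
  constructor
  · rintro ⟨g, hg⟩
    exact ⟨e g, fun i => by
      show e g * e (x i) * (e g)⁻¹ = e (y i)
      rw [← map_inv, ← map_mul, ← map_mul]; exact congrArg e (hg i)⟩
  · rintro ⟨g, hg⟩
    refine ⟨e.symm g, fun i => e.injective ?_⟩
    simp only [map_mul, map_inv, e.apply_symm_apply]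
    exact hg i

lemma centralizer_map_conj (h g : G) :
    (Subgroup.centralizer {g}).map ((MulAut.conj h : G ≃* G) : G →* G)
      = Subgroup.centralizer {h * g * h⁻¹} := by
  ext x
  rw [← MulEquiv.toMonoidHom_eq_coe, Subgroup.mem_map_equiv]
  simp only [Subgroup.mem_centralizer_singleton_iff, MulAut.conj_symm_apply]
  constructor
  · intro hx
    calc x * (h * g * h⁻¹) = h * (h⁻¹ * x * h * g) * h⁻¹ := by group
      _ = h * (g * (h⁻¹ * x * h)) * h⁻¹ := by rw [hx]
      _ = h * g * h⁻¹ * x := by group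
  · intro hx
    calc h⁻¹ * x * h * g = h⁻¹ * (x * (h * g * h⁻¹)) * h := by group
      _ = h⁻¹ * (h * g * h⁻¹ * x) * h := by rw [hx]
      _ = g * (h⁻¹ * x * h) := by group

noncomputable def conjCentIso (h g : G) :
    (Subgroup.centralizer {g} : Subgroup G) ≃* Subgroup.centralizer {h * g * h⁻¹} :=
  ((MulAut.conj h : G ≃* G).subgroupMap (Subgroup.centralizer {g})).trans
    (MulEquiv.subgroupCongr (centralizer_map_conj h g))

/-- centralizers of conjugate elements are isomorphic -/
lemma centIso_of_isConj {a b : G} (hab : IsConj a b) :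
    Nonempty ((Subgroup.centralizer {a} : Subgroup G) ≃* Subgroup.centralizer {b}) := by
  obtain ⟨h, hh⟩ := isConj_iff.mp hab
  exact ⟨hh ▸ conjCentIso h a⟩

end Aux

section Main

variable {G : Type*} [Group G]

/-- a chosen representative of a conjugacy class -/
noncomputable def repc (c : ConjClasses G) : G := Quotient.out c

lemma mk_repc (c : ConjClasses G) : ConjClasses.mk (repc c) = c := by
  rw [← ConjClasses.quotient_mk_eq_mk]; exact Quotient.out_eq c

lemma commute_coe {H : Subgroup G} {a b : H} (h : Commute a b) : Commute (a : G) (b : G) := by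
  have := Subtype.ext_iff.mp h
  exact this

variable {m : ℕ}

/-- prepend the representative of `c` to a commuting tuple in its centralizer -/
noncomputable def consTuple (c : ConjClasses G) (y : CommTuple (Subgroup.centralizer {repc c}) m) :
    CommTuple G (m + 1) :=
  ⟨Fin.cons (repc c) (fun i => (y.1 i : G)), by
    have hy : ∀ i, (y.1 i : G) ∈ Subgroup.centralizer {repc c} := fun i => (y.1 i).2
    intro i j
    refine Fin.cases (Fin.cases (Commute.refl _) (fun j' => ?_) j)
      (fun i' => Fin.cases ?_ (fun j' => ?_) j) i
    · simp only [Fin.cons_zero, Fin.cons_succ]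
      exact (Subgroup.mem_centralizer_singleton_iff.mp (hy j')).symm
    · simp only [Fin.cons_zero, Fin.cons_succ]
      exact Subgroup.mem_centralizer_singleton_iff.mp (hy i')
    · simp only [Fin.cons_succ]
      exact commute_coe (y.2 i' j')⟩

/-- the gluing map -/
noncomputable def psi (c : ConjClasses G) :
    Quot (fun x y : CommTuple (Subgroup.centralizer {repc c}) m =>
      simulConjRel (Subgroup.centralizer {repc c}) m x.1 y.1) →
    Quot (fun x y : CommTuple G (m + 1) => simulConjRel G (m + 1) x.1 y.1) :=
  Quot.lift (fun y => Quot.mk _ (consTuple c y)) (by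
    rintro y y' ⟨g, hg⟩
    apply Quot.sound
    refine ⟨(g : G), fun i => ?_⟩
    refine Fin.cases ?_ (fun i' => ?_) i
    · have hgc : (g : G) * repc c = repc c * g :=
        Subgroup.mem_centralizer_singleton_iff.mp g.2
      simp only [consTuple, Fin.cons_zero]
      rw [hgc]; group
    · simp only [consTuple, Fin.cons_succ]
      have := Subtype.ext_iff.mp (hg i')
      simpa using this)

lemma psi_bijective (G : Type*) [Group G] (m : ℕ) :
    Function.Bijective (fun p : Σ c : ConjClasses G,
        Quot (fun x y : CommTuple (Subgroup.centralizer {repc c}) m =>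
          simulConjRel (Subgroup.centralizer {repc c}) m x.1 y.1) => psi p.1 p.2) := by
  constructor
  · rintro ⟨c, q⟩ ⟨c', q'⟩ hpq
    induction q using Quot.ind with | _ y => ?_
    induction q' using Quot.ind with | _ y' => ?_
    obtain ⟨g, hg⟩ := ct_mk_eq.mp hpq
    have h0 : g * repc c * g⁻¹ = repc c' := by
      have := hg 0
      simpa [consTuple] using this
    have hcc : c = c' := by
      rw [← mk_repc c, ← mk_repc c', ConjClasses.mk_eq_mk_iff_isConj]
      exact isConj_iff.mpr ⟨g, h0⟩
    subst hcc
    have hgmem : g ∈ Subgroup.centralizer {repc c} := by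
      rw [Subgroup.mem_centralizer_singleton_iff]
      have h2 : g * repc c = g * repc c * g⁻¹ * g := by group
      rw [h0] at h2
      exact h2
    refine congrArg (fun q => (⟨c, q⟩ : Σ c : ConjClasses G, _)) (Quot.sound ?_)
    refine ⟨⟨g, hgmem⟩, fun i => Subtype.ext ?_⟩
    have := hg i.succ
    simpa [consTuple] using this
  · intro q
    induction q using Quot.ind with | _ x => ?_
    set c : ConjClasses G := ConjClasses.mk (x.1 0) with hc
    have hconj : IsConj (x.1 0) (repc c) :=
      (ConjClasses.mk_eq_mk_iff_isConj.mp (mk_repc c)).symm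
    obtain ⟨h, hh⟩ := isConj_iff.mp hconj
    have key : ∀ i j : Fin (m + 1),
        (h * x.1 i * h⁻¹) * (h * x.1 j * h⁻¹) = (h * x.1 j * h⁻¹) * (h * x.1 i * h⁻¹) := by
      intro i j
      calc (h * x.1 i * h⁻¹) * (h * x.1 j * h⁻¹) = h * (x.1 i * x.1 j) * h⁻¹ := by group
        _ = h * (x.1 j * x.1 i) * h⁻¹ := by rw [x.2 i j]
        _ = (h * x.1 j * h⁻¹) * (h * x.1 i * h⁻¹) := by group
    have hmem : ∀ i : Fin m, h * x.1 i.succ * h⁻¹ ∈ Subgroup.centralizer {repc c} := by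
      intro i
      rw [Subgroup.mem_centralizer_singleton_iff, ← hh]
      exact key i.succ 0
    refine ⟨⟨c, Quot.mk _ ⟨fun i => ⟨h * x.1 i.succ * h⁻¹, hmem i⟩,
      fun i j => Subtype.ext (key i.succ j.succ)⟩⟩, ?_⟩
    show Quot.mk _ (consTuple c _) = Quot.mk _ x
    refine (ct_mk_eq.mpr ⟨h, fun i => ?_⟩).symm
    refine Fin.cases ?_ (fun i' => ?_) i
    · simpa [consTuple] using hh
    · simp [consTuple]

lemma beta_step (G : Type*) [Group G] (m : ℕ) :
    betaCount G (m + 1) =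
      Nat.card (Σ c : ConjClasses G,
        Quot (fun x y : CommTuple (Subgroup.centralizer {repc c}) m =>
          simulConjRel (Subgroup.centralizer {repc c}) m x.1 y.1)) :=
  (Nat.card_congr (Equiv.ofBijective _ (psi_bijective G m))).symm

lemma nat_card_sigma {ι : Type*} [Fintype ι] (f : ι → Type*) [∀ i, Finite (f i)] :
    Nat.card (Σ i, f i) = ∑ i, Nat.card (f i) := by
  haveI : ∀ i, Fintype (f i) := fun i => Fintype.ofFinite _
  simp [Nat.card_eq_fintype_card, Fintype.card_sigma]

end Main


theorem stmt_3 (G : Type*) [Group G] [Finite G] (n : ℕ) (hn : 1 ≤ n)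
    (S : Finset (Subgroup G))
    (hS1 : ∀ H ∈ S, ∃ g : G, H = Subgroup.centralizer {g})
    (hS2 : ∀ g : G, ∃! H, H ∈ S ∧ Nonempty (Subgroup.centralizer {g} ≃* H)) :
    betaCount G n =
      ∑ H ∈ S,
        Nat.card {c : ConjClasses G |
            ∃ g : G, ConjClasses.mk g = c ∧ Nonempty (Subgroup.centralizer {g} ≃* H)} *
          betaCount H (n - 1) := by
  classical
  obtain ⟨m, rfl⟩ : ∃ m, n = m + 1 := ⟨n - 1, (Nat.succ_pred_eq_of_pos hn).symm⟩
  haveI : Fintype (ConjClasses G) := Fintype.ofFinite _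
  set f : ConjClasses G → Subgroup G := fun c => (hS2 (repc c)).choose with hf
  have hfS : ∀ c, f c ∈ S := fun c => (hS2 (repc c)).choose_spec.1.1
  have hfiso : ∀ c, Nonempty ((Subgroup.centralizer {repc c} : Subgroup G) ≃* f c) :=
    fun c => (hS2 (repc c)).choose_spec.1.2
  have hfuniq : ∀ c H, H ∈ S →
      Nonempty ((Subgroup.centralizer {repc c} : Subgroup G) ≃* H) → H = f c :=
    fun c H h1 h2 => (hS2 (repc c)).choose_spec.2 H ⟨h1, h2⟩
  rw [beta_step, nat_card_sigma]
  have h1 : ∀ c : ConjClasses G,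
      Nat.card (Quot (fun x y : CommTuple (Subgroup.centralizer {repc c}) m =>
        simulConjRel (Subgroup.centralizer {repc c}) m x.1 y.1)) = betaCount (f c) m :=
    fun c => (hfiso c).elim fun e => beta_congr e m
  rw [Finset.sum_congr rfl fun c _ => h1 c]
  rw [← Finset.sum_fiberwise_of_maps_to (fun c _ => hfS c) (fun c => betaCount (f c) m)]
  refine Finset.sum_congr rfl fun H hH => ?_
  have h2 : ∑ c ∈ Finset.univ.filter (fun c => f c = H), betaCount (f c) m
      = (Finset.univ.filter (fun c => f c = H)).card * betaCount H m := by
    rw [Finset.sum_congr rfl (fun c hc => by rw [(Finset.mem_filter.mp hc).2]),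
      Finset.sum_const, smul_eq_mul]
  rw [h2]
  congr 1
  · have hset : {c : ConjClasses G |
        ∃ g, ConjClasses.mk g = c ∧ Nonempty (Subgroup.centralizer {g} ≃* H)}
        = {c | f c = H} := by
      ext c
      simp only [Set.mem_setOf_eq]
      constructor
      · rintro ⟨g, hgc, ⟨e⟩⟩
        have hgc2 : IsConj g (repc c) :=
          ConjClasses.mk_eq_mk_iff_isConj.mp (by rw [hgc, mk_repc])
        obtain ⟨e2⟩ := centIso_of_isConj hgc2
        exact (hfuniq c H hH ⟨e2.symm.trans e⟩).symm
      · intro hc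
        exact ⟨repc c, mk_repc c, hc ▸ hfiso c⟩
    rw [hset, Nat.card_eq_fintype_card]
    exact (Fintype.card_subtype _).symm
end

section
/- Two finite groups G₁ and G₂ satisfy α_{G₁,n} = α_{G₂,n} for all n ≥ 0 if and only if they have the same class equation, i.e., the multiset of conjugacy class sizes of G₁ equals that of G₂ (in particular |G₁| = |G₂|). -/
namespace Stmt4Aux

open MulAction Finset

/-! ### Pure `ℕ` power-sum uniqueness -/

lemma powsum_aux (e : ℕ) : ∀ n, (e + n) * e ^ n ≤ (e + 1) ^ (n + 1) := by
  intro n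
  induction n with
  | zero => simp
  | succ n ih =>
    have h1 : e ^ (n + 1) ≤ (e + 1) ^ (n + 1) := Nat.pow_le_pow_left (by omega) _
    calc (e + (n + 1)) * e ^ (n + 1) = ((e + n) * e ^ n) * e + e ^ (n + 1) := by ring
      _ ≤ (e + 1) ^ (n + 1) * e + (e + 1) ^ (n + 1) :=
          Nat.add_le_add (Nat.mul_le_mul_right _ ih) h1
      _ = (e + 1) ^ (n + 2) := by ring

lemma exists_pow_big (D C : ℕ) (hD : 0 < D) : ∃ n, C * (D - 1) ^ n < D ^ n := by
  rcases eq_or_lt_of_le (show 1 ≤ D from hD) with h1 | h2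
  · exact ⟨1, by simp [← h1]⟩
  · set e := D - 1 with he
    have hDe : D = e + 1 := by omega
    have hepos : 0 < e := by omega
    set m := C * e + 1 with hm
    refine ⟨m + 1, ?_⟩
    have key := powsum_aux e m
    have h3 : C * e ^ (m + 1) = (C * e) * e ^ m := by ring
    have h4 : (C * e) * e ^ m < (e + m) * e ^ m :=
      (Nat.mul_lt_mul_right (Nat.pow_pos (n := m) hepos)).mpr (by omega)
    rw [hDe]
    omega

lemma top_eq (D : ℕ) (f g : ℕ → ℕ)
    (h : ∀ n, ∑ d ∈ range (D + 1), f d * d ^ n = ∑ d ∈ range (D + 1), g d * d ^ n)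
    (hD : 0 < D) : f D = g D := by
  by_contra hne
  wlog hlt : f D < g D generalizing f g
  · exact this g f (fun n => (h n).symm) (Ne.symm hne) (by omega)
  obtain ⟨n, hn⟩ := exists_pow_big D (∑ d ∈ range D, f d) hD
  have hb : ∑ d ∈ range D, f d * d ^ n ≤ (∑ d ∈ range D, f d) * (D - 1) ^ n := by
    rw [Finset.sum_mul]
    refine Finset.sum_le_sum fun d hd => ?_
    have hdle : d ≤ D - 1 := by have := Finset.mem_range.1 hd; omega
    exact Nat.mul_le_mul_left _ (Nat.pow_le_pow_left hdle n)
  have h1 := h n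
  rw [Finset.sum_range_succ, Finset.sum_range_succ] at h1
  have h4 : (f D + 1) * D ^ n ≤ g D * D ^ n := Nat.mul_le_mul_right _ hlt
  have h6 : (f D + 1) * D ^ n = f D * D ^ n + D ^ n := by ring
  have h7 : 0 ≤ ∑ x ∈ range D, g x * x ^ n := Nat.zero_le _
  linarith [hn, hb, h1, h4, h6, h7]

lemma powsum_unique : ∀ (D : ℕ) (f g : ℕ → ℕ),
    (∀ n, ∑ d ∈ range D, f d * d ^ n = ∑ d ∈ range D, g d * d ^ n) →
    ∀ d, 0 < d → d < D → f d = g d := by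
  intro D
  induction D with
  | zero => intro f g h d h1 h2; omega
  | succ D ih =>
    intro f g h d hd hdD
    have hDpos : 0 < D := by omega
    have htop := top_eq D f g h hDpos
    rcases eq_or_lt_of_le (Nat.lt_succ_iff.1 hdD) with rfl | hlt
    · exact htop
    · have h' : ∀ n, ∑ d ∈ range D, f d * d ^ n = ∑ d ∈ range D, g d * d ^ n := fun n => by
        have := h n
        rw [Finset.sum_range_succ, Finset.sum_range_succ, htop] at this
        omega
      exact ih f g h' d hd hlt

/-! ### Generic fiberwise counting -/

lemma natCard_setOf {α : Type*} [Fintype α] (p : α → Prop) [DecidablePred p] :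
    Nat.card {x | p x} = (Finset.univ.filter p).card := by
  rw [Nat.card_eq_fintype_card]
  convert Fintype.card_subtype p using 2
  rfl

lemma sum_comp_fiber {α : Type*} [Fintype α] (F : α → ℕ) (f : ℕ → ℕ) (D : ℕ)
    (hF : ∀ a, F a ≤ D) :
    ∑ a : α, f (F a) = ∑ k ∈ range (D + 1), Nat.card {a | F a = k} * f k := by
  classical
  rw [← Finset.sum_fiberwise_of_maps_to' (g := F) (t := range (D + 1))
    (fun a _ => Finset.mem_range_succ_iff.mpr (hF a)) f]
  refine Finset.sum_congr rfl fun k _ => ?_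
  rw [Finset.sum_const, smul_eq_mul, natCard_setOf]

/-! ### Conjugacy class counting -/

variable {G : Type*} [Group G]

/-- The centralizer size attached to a conjugacy class. -/
noncomputable def Zc (G : Type*) [Group G] (c : ConjClasses G) : ℕ :=
  Nat.card G / Nat.card c.carrier

lemma carrier_mul_stab (g : G) :
    Nat.card (ConjClasses.mk g).carrier * Nat.card (stabilizer (ConjAct G) g) = Nat.card G := by
  rw [← ConjAct.orbit_eq_carrier_conjClasses, ← Nat.card_prod]
  exact Nat.card_congr (orbitProdStabilizerEquivGroup (ConjAct G) g)

lemma carrier_dvd (c : ConjClasses G) : Nat.card c.carrier ∣ Nat.card G := by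
  obtain ⟨g, rfl⟩ := ConjClasses.mk_surjective c
  exact ⟨_, (carrier_mul_stab g).symm⟩

lemma carrier_mul_Zc (c : ConjClasses G) :
    Nat.card c.carrier * Zc G c = Nat.card G :=
  Nat.mul_div_cancel' (carrier_dvd c)

lemma Zc_dvd (c : ConjClasses G) : Zc G c ∣ Nat.card G :=
  ⟨Nat.card c.carrier, by rw [← carrier_mul_Zc c, mul_comm]⟩

section fin
variable [Finite G]

lemma carrier_pos (c : ConjClasses G) : 0 < Nat.card c.carrier := by
  obtain ⟨g, rfl⟩ := ConjClasses.mk_surjective c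
  have : Nonempty (ConjClasses.mk g).carrier := ⟨⟨g, ConjClasses.mem_carrier_iff_mk_eq.2 rfl⟩⟩
  exact Nat.card_pos

lemma carrier_le (c : ConjClasses G) : Nat.card c.carrier ≤ Nat.card G :=
  Nat.le_of_dvd Nat.card_pos (carrier_dvd c)

lemma Zc_pos (c : ConjClasses G) : 0 < Zc G c := by
  have h := carrier_mul_Zc (G := G) c
  have hN : 0 < Nat.card G := Nat.card_pos
  rcases Nat.eq_zero_or_pos (Zc G c) with hz | hp
  · rw [hz, mul_zero] at h; omega
  · exact hp

lemma Zc_le (c : ConjClasses G) : Zc G c ≤ Nat.card G :=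
  Nat.le_of_dvd Nat.card_pos (Zc_dvd c)

omit [Finite G] in
lemma Zc_mk_one : Zc G (ConjClasses.mk (1 : G)) = Nat.card G := by
  have : (ConjClasses.mk (1 : G)).carrier = {1} := by
    ext x
    rw [Set.mem_singleton_iff, ConjClasses.mem_carrier_iff_mk_eq,
      ConjClasses.mk_eq_mk_iff_isConj, isConj_one_left]
  rw [Zc, this]
  simp

lemma stab_card (g : G) :
    Nat.card (MulAction.fixedBy G (ConjAct.toConjAct g)) = Zc G (ConjClasses.mk g) := by
  have e : MulAction.fixedBy G (ConjAct.toConjAct g) ≃ stabilizer (ConjAct G) g := by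
    refine ⟨fun b => ⟨ConjAct.toConjAct b.1, ?_⟩, fun u => ⟨ConjAct.ofConjAct u.1, ?_⟩, ?_, ?_⟩
    · have hb := b.2
      simp only [MulAction.mem_fixedBy, ConjAct.toConjAct_smul] at hb
      have hc : g * b.1 = b.1 * g := by
        rw [mul_inv_eq_iff_eq_mul] at hb; exact hb
      rw [mem_stabilizer_iff, ConjAct.toConjAct_smul, ← hc]
      simp [mul_assoc]
    · have hu := u.2
      rw [mem_stabilizer_iff] at hu
      have hu' : ConjAct.ofConjAct u.1 * g * (ConjAct.ofConjAct u.1)⁻¹ = g := by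
        simpa [ConjAct.smul_def] using hu
      have hc : ConjAct.ofConjAct u.1 * g = g * ConjAct.ofConjAct u.1 := by
        rw [mul_inv_eq_iff_eq_mul] at hu'; exact hu'
      simp only [MulAction.mem_fixedBy, ConjAct.toConjAct_smul, ← hc]
      simp [mul_assoc]
    · intro b; rfl
    · intro u; rfl
  rw [Nat.card_congr e]
  have h := carrier_mul_stab g
  have hpos := carrier_pos (ConjClasses.mk g)
  rw [Zc, ← h, Nat.mul_div_cancel_left _ hpos]

end fin

/-! ### Burnside -/

lemma alpha_eq_card_quotient (n : ℕ) :
    alphaCount G n = Nat.card (Quotient (orbitRel (ConjAct G) (Fin n → G))) := by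
  have h : simulConjRel G n = (orbitRel (ConjAct G) (Fin n → G)).r := by
    funext x y
    apply propext
    rw [show (orbitRel (ConjAct G) (Fin n → G)).r x y ↔ x ∈ orbit (ConjAct G) y from Iff.rfl,
      mem_orbit_iff]
    constructor
    · rintro ⟨g, hg⟩
      refine ⟨(ConjAct.toConjAct g)⁻¹, ?_⟩
      funext i
      simp only [Pi.smul_apply, ← map_inv, ConjAct.toConjAct_smul, ← hg i]
      group
    · rintro ⟨u, hu⟩
      refine ⟨(ConjAct.ofConjAct u)⁻¹, fun i => ?_⟩
      have := congrFun hu i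
      simp only [Pi.smul_apply, ConjAct.smul_def] at this
      rw [← this]
      group
  unfold alphaCount
  rw [h]
  rfl

lemma card_fixedBy_pi (n : ℕ) [Fintype G] (u : ConjAct G) :
    Nat.card (fixedBy (Fin n → G) u) = Nat.card (fixedBy G u) ^ n := by
  have e : fixedBy (Fin n → G) u ≃ (Fin n → fixedBy G u) :=
    { toFun := fun x i => ⟨x.1 i, congrFun x.2 i⟩
      invFun := fun f => ⟨fun i => (f i).1, funext fun i => (f i).2⟩
      left_inv := fun x => rfl
      right_inv := fun f => rfl }
  rw [Nat.card_congr e, Nat.card_fun]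
  simp

lemma alpha_mul_card [Fintype G] (n : ℕ) :
    alphaCount G n * Nat.card G = ∑ g : G, Nat.card (fixedBy G (ConjAct.toConjAct g)) ^ n := by
  classical
  letI : Fintype (ConjAct G) := ‹Fintype G›
  letI : Fintype (Quotient (orbitRel (ConjAct G) (Fin n → G))) := Fintype.ofFinite _
  have hb := MulAction.sum_card_fixedBy_eq_card_orbits_mul_card_group (ConjAct G) (Fin n → G)
  rw [alpha_eq_card_quotient n, Nat.card_eq_fintype_card, Nat.card_eq_fintype_card (α := G)]
  have hc : Fintype.card (ConjAct G) = Fintype.card G := rfl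
  rw [← hc, ← hb]
  rw [← (ConjAct.toConjAct (G := G)).toEquiv.sum_comp
    (fun u => Fintype.card (fixedBy (Fin n → G) u))]
  refine Finset.sum_congr rfl fun g _ => ?_
  rw [← Nat.card_eq_fintype_card, card_fixedBy_pi]
  rfl

lemma sum_group_by_class [Fintype G] [Fintype (ConjClasses G)] (h : ConjClasses G → ℕ) :
    ∑ g : G, h (ConjClasses.mk g) = ∑ c : ConjClasses G, Nat.card c.carrier * h c := by
  classical
  rw [← Finset.sum_fiberwise' Finset.univ ConjClasses.mk h]
  refine Finset.sum_congr rfl fun c _ => ?_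
  rw [Finset.sum_const, smul_eq_mul]
  congr 1
  rw [show c.carrier = {x | ConjClasses.mk x = c} from
    Set.ext fun x => ConjClasses.mem_carrier_iff_mk_eq, natCard_setOf]

/-- The master formula: `α_{G,n+1} = ∑_d m_G(d) d^n` where `m_G(d)` is the number of
conjugacy classes with centralizer size `d`. -/
lemma alpha_formula [Fintype G] (n D : ℕ) (hD : Nat.card G ≤ D) :
    alphaCount G (n + 1)
      = ∑ d ∈ range (D + 1), Nat.card {c : ConjClasses G | Zc G c = d} * d ^ n := by
  classical
  letI := Fintype.ofFinite (ConjClasses G)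
  have h1 := alpha_mul_card (G := G) (n + 1)
  have h2 : ∑ g : G, Nat.card (fixedBy G (ConjAct.toConjAct g)) ^ (n + 1)
      = ∑ g : G, Zc G (ConjClasses.mk g) ^ (n + 1) :=
    Finset.sum_congr rfl fun g _ => by rw [stab_card]
  have h3 := sum_group_by_class (G := G) (fun c => Zc G c ^ (n + 1))
  have h4 : ∑ c : ConjClasses G, Nat.card c.carrier * Zc G c ^ (n + 1)
      = Nat.card G * ∑ c : ConjClasses G, Zc G c ^ n := by
    rw [Finset.mul_sum]
    refine Finset.sum_congr rfl fun c _ => ?_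
    rw [pow_succ', ← mul_assoc, carrier_mul_Zc]
  have h5 : ∑ c : ConjClasses G, Zc G c ^ n
      = ∑ d ∈ range (D + 1), Nat.card {c : ConjClasses G | Zc G c = d} * d ^ n :=
    sum_comp_fiber (Zc G) (· ^ n) D fun c => le_trans (Zc_le c) hD
  have hN : 0 < Nat.card G := Nat.card_pos
  refine Nat.eq_of_mul_eq_mul_left hN ?_
  rw [← h5, ← h4, ← h3, ← h2, ← h1, mul_comm]

lemma alpha_zero : alphaCount G 0 = 1 := by
  rw [alphaCount, Nat.card_eq_one_iff_unique]
  constructor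
  · constructor
    intro a b
    induction a using Quot.ind with | _ a =>
    induction b using Quot.ind with | _ b =>
    exact congrArg _ (funext fun i => i.elim0)
  · exact ⟨Quot.mk _ fun _ => 1⟩

/-! ### Translating between class-size counts and centralizer-size counts -/

variable [Finite G]

lemma card_carrier_set (k : ℕ) :
    Nat.card {c : ConjClasses G | Nat.card c.carrier = k}
      = if k ∣ Nat.card G ∧ 0 < k
        then Nat.card {c : ConjClasses G | Zc G c = Nat.card G / k} else 0 := by
  have hN : (Nat.card G) ≠ 0 := Nat.card_pos.ne'
  split_ifs with hk
  · have hset : {c : ConjClasses G | Nat.card c.carrier = k}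
        = {c : ConjClasses G | Zc G c = Nat.card G / k} := by
      ext c
      simp only [Set.mem_setOf_eq]
      constructor
      · rintro rfl; rfl
      · intro hz
        have h1 : Nat.card G / Nat.card c.carrier = Nat.card G / k := hz
        have h2 : Nat.card G / (Nat.card G / Nat.card c.carrier) = Nat.card c.carrier :=
          Nat.div_div_self (carrier_dvd c) hN
        rw [h1, Nat.div_div_self hk.1 hN] at h2
        exact h2.symm
    rw [hset]
  · have hset : {c : ConjClasses G | Nat.card c.carrier = k} = (∅ : Set (ConjClasses G)) := by
      ext c
      simp only [Set.mem_setOf_eq, Set.mem_empty_iff_false, iff_false]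
      rintro rfl
      exact hk ⟨carrier_dvd c, carrier_pos c⟩
    rw [hset]
    simp

lemma card_Zc_set (d : ℕ) :
    Nat.card {c : ConjClasses G | Zc G c = d}
      = if d ∣ Nat.card G ∧ 0 < d
        then Nat.card {c : ConjClasses G | Nat.card c.carrier = Nat.card G / d} else 0 := by
  have hN : (Nat.card G) ≠ 0 := Nat.card_pos.ne'
  split_ifs with hd
  · have hset : {c : ConjClasses G | Zc G c = d}
        = {c : ConjClasses G | Nat.card c.carrier = Nat.card G / d} := by
      ext c
      simp only [Set.mem_setOf_eq]
      constructor
      · rintro rfl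
        exact (Nat.div_div_self (carrier_dvd c) hN).symm
      · intro hc
        rw [Zc, hc, Nat.div_div_self hd.1 hN]
    rw [hset]
  · have hset : {c : ConjClasses G | Zc G c = d} = (∅ : Set (ConjClasses G)) := by
      ext c
      simp only [Set.mem_setOf_eq, Set.mem_empty_iff_false, iff_false]
      rintro rfl
      exact hd ⟨Zc_dvd c, Zc_pos c⟩
    rw [hset]
    simp

lemma mcount_N_pos : 0 < Nat.card {c : ConjClasses G | Zc G c = Nat.card G} := by
  have : Nonempty {c : ConjClasses G | Zc G c = Nat.card G} :=
    ⟨⟨ConjClasses.mk 1, Zc_mk_one⟩⟩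
  exact Nat.card_pos

lemma card_le_of_mcount_pos (d : ℕ)
    (hd : Nat.card {c : ConjClasses G | Zc G c = d} ≠ 0) : d ≤ Nat.card G := by
  obtain ⟨⟨⟨c, hc⟩⟩, -⟩ := Nat.card_ne_zero.1 hd
  exact hc ▸ Zc_le c

/-- Class equation, fiberwise form. -/
lemma card_eq_sum_kcount [Fintype G] (D : ℕ) (hD : Nat.card G ≤ D) :
    Nat.card G
      = ∑ k ∈ range (D + 1), Nat.card {c : ConjClasses G | Nat.card c.carrier = k} * k := by
  classical
  letI := Fintype.ofFinite (ConjClasses G)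
  letI : ∀ c : ConjClasses G, Fintype c.carrier := fun c => Fintype.ofFinite _
  have h0 : ∑ c : ConjClasses G, Nat.card c.carrier = Nat.card G := by
    rw [Nat.card_eq_fintype_card, ← sum_conjClasses_card_eq_card]
    refine Finset.sum_congr rfl fun c _ => ?_
    rw [Set.toFinset_card, Nat.card_eq_fintype_card]
  rw [← h0]
  have key := sum_comp_fiber (α := ConjClasses G) (F := fun c => Nat.card c.carrier)
    (f := fun k => k) (D := D) (fun c => le_trans (carrier_le c) hD)
  exact key

end Stmt4Aux

open Stmt4Aux Finset in
theorem stmt_4 (G₁ G₂ : Type*) [Group G₁] [Group G₂] [Finite G₁] [Finite G₂] :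
    (∀ n : ℕ, alphaCount G₁ n = alphaCount G₂ n) ↔
      ∀ k : ℕ,
        Nat.card {c : ConjClasses G₁ | Nat.card c.carrier = k} =
          Nat.card {c : ConjClasses G₂ | Nat.card c.carrier = k} := by
  classical
  cases nonempty_fintype G₁
  cases nonempty_fintype G₂
  set N₁ := Nat.card G₁ with hN₁
  set N₂ := Nat.card G₂ with hN₂
  set D := max N₁ N₂ with hD
  have hD₁ : N₁ ≤ D := le_max_left _ _
  have hD₂ : N₂ ≤ D := le_max_right _ _
  constructor
  · intro h
    have hs : ∀ n, ∑ d ∈ range (D + 1), Nat.card {c : ConjClasses G₁ | Zc G₁ c = d} * d ^ n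
        = ∑ d ∈ range (D + 1), Nat.card {c : ConjClasses G₂ | Zc G₂ c = d} * d ^ n := fun n => by
      rw [← alpha_formula n D hD₁, ← alpha_formula n D hD₂, h (n + 1)]
    have hm : ∀ d, Nat.card {c : ConjClasses G₁ | Zc G₁ c = d}
        = Nat.card {c : ConjClasses G₂ | Zc G₂ c = d} := by
      intro d
      rcases Nat.eq_zero_or_pos d with rfl | hdpos
      · have e1 : {c : ConjClasses G₁ | Zc G₁ c = 0} = ∅ :=
          Set.eq_empty_iff_forall_notMem.2 fun c hc => (Zc_pos c).ne' hc
        have e2 : {c : ConjClasses G₂ | Zc G₂ c = 0} = ∅ :=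
          Set.eq_empty_iff_forall_notMem.2 fun c hc => (Zc_pos c).ne' hc
        rw [e1, e2]
        simp
      · rcases le_or_gt d D with hdle | hdgt
        · exact powsum_unique (D + 1) _ _ hs d hdpos (by omega)
        · have e1 : Nat.card {c : ConjClasses G₁ | Zc G₁ c = d} = 0 := by
            by_contra hne
            exact absurd (card_le_of_mcount_pos d hne) (by omega)
          have e2 : Nat.card {c : ConjClasses G₂ | Zc G₂ c = d} = 0 := by
            by_contra hne
            exact absurd (card_le_of_mcount_pos d hne) (by omega)
          rw [e1, e2]
    have hN : N₁ = N₂ := by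
      have h1 : N₁ ≤ N₂ := by
        have := mcount_N_pos (G := G₁)
        rw [← hN₁, hm N₁] at this
        exact card_le_of_mcount_pos N₁ this.ne'
      have h2 : N₂ ≤ N₁ := by
        have := mcount_N_pos (G := G₂)
        rw [← hN₂, ← hm N₂] at this
        exact card_le_of_mcount_pos N₂ this.ne'
      omega
    intro k
    rw [card_carrier_set k, card_carrier_set k, ← hN₁, ← hN₂, ← hN]
    split_ifs with hk
    · exact hm (N₁ / k)
    · rfl
  · intro h
    have hN : N₁ = N₂ := by
      rw [hN₁, hN₂, card_eq_sum_kcount D hD₁, card_eq_sum_kcount D hD₂]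
      exact Finset.sum_congr rfl fun k _ => by rw [h k]
    have hm : ∀ d, Nat.card {c : ConjClasses G₁ | Zc G₁ c = d}
        = Nat.card {c : ConjClasses G₂ | Zc G₂ c = d} := by
      intro d
      rw [card_Zc_set d, card_Zc_set d, ← hN₁, ← hN₂, ← hN]
      split_ifs with hd
      · exact h (N₁ / d)
      · rfl
    intro n
    rcases n with _ | n
    · rw [alpha_zero, alpha_zero]
    · rw [alpha_formula n D hD₁, alpha_formula n D hD₂]
      exact Finset.sum_congr rfl fun d _ => by rw [hm d]
end

section
/- Let G be a p-group of order p^m with |G/Z(G)| = p². Then every centralizer of a non-central element of G is abelian of index p in G, and α_{G,n} = (1/p^m)(p^{m−2} · p^{mn} + (p^m − p^{m−2}) · p^{(m−1)n}) for all n ≥ 0. -/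
section aux
variable {p m : ℕ} [Fact p.Prime] {G : Type*} [Group G] [Finite G]

lemma aux_two_le_m (hG : Nat.card G = p ^ m) (hZ : (Subgroup.center G).index = p ^ 2) :
    2 ≤ m := by
  have hp := (Fact.out : p.Prime)
  have h := Subgroup.card_mul_index (Subgroup.center G)
  rw [hZ, hG] at h
  have hdvd : p ^ 2 ∣ p ^ m := Dvd.intro_left _ h
  exact (Nat.pow_dvd_pow_iff_le_right hp.one_lt).mp hdvd

lemma aux_card_center (hG : Nat.card G = p ^ m) (hZ : (Subgroup.center G).index = p ^ 2) :
    Nat.card (Subgroup.center G) = p ^ (m - 2) := by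
  have hp := (Fact.out : p.Prime)
  have hm := aux_two_le_m hG hZ
  have h := Subgroup.card_mul_index (Subgroup.center G)
  rw [hZ, hG] at h
  have : p ^ (m - 2) * p ^ 2 = p ^ m := by
    rw [← pow_add]; congr 1; omega
  have hpos : 0 < p ^ 2 := pow_pos hp.pos 2
  exact Nat.eq_of_mul_eq_mul_right hpos (by rw [h, this])

lemma aux_centralizer_index (hG : Nat.card G = p ^ m)
    (hZ : (Subgroup.center G).index = p ^ 2) {g : G} (hg : g ∉ Subgroup.center G) :
    (Subgroup.centralizer {g}).index = p := by
  have hp := (Fact.out : p.Prime)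
  have hle : Subgroup.center G ≤ Subgroup.centralizer {g} :=
    Subgroup.center_le_centralizer {g}
  have hdvd : (Subgroup.centralizer {g}).index ∣ p ^ 2 := by
    rw [← hZ]; exact Subgroup.index_dvd_of_le hle
  obtain ⟨k, hk, hke⟩ := (Nat.dvd_prime_pow hp).mp hdvd
  interval_cases k
  · exfalso
    apply hg
    have : Subgroup.centralizer {g} = ⊤ := Subgroup.index_eq_one.mp (by simpa using hke)
    have := Subgroup.centralizer_eq_top_iff_subset.mp this
    exact this rfl
  · simpa using hke
  · exfalso
    have hcards : Nat.card (Subgroup.centralizer {g}) = Nat.card (Subgroup.center G) := by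
      have h1 := Subgroup.card_mul_index (Subgroup.centralizer {g})
      have h2 := Subgroup.card_mul_index (Subgroup.center G)
      rw [hke] at h1
      rw [hZ] at h2
      have hpos : 0 < p ^ 2 := pow_pos hp.pos 2
      exact Nat.eq_of_mul_eq_mul_right hpos (by rw [h1, h2])
    have heq : Subgroup.center G = Subgroup.centralizer {g} :=
      Subgroup.eq_of_le_of_card_ge hle hcards.le
    apply hg
    rw [heq]
    exact Subgroup.mem_centralizer_singleton_iff.mpr rfl

lemma aux_centralizer_card (hG : Nat.card G = p ^ m)
    (hZ : (Subgroup.center G).index = p ^ 2) {g : G} (hg : g ∉ Subgroup.center G) :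
    Nat.card (Subgroup.centralizer {g}) = p ^ (m - 1) := by
  have hp := (Fact.out : p.Prime)
  have hm := aux_two_le_m hG hZ
  have h := Subgroup.card_mul_index (Subgroup.centralizer {g})
  rw [aux_centralizer_index hG hZ hg, hG] at h
  have : p ^ (m - 1) * p = p ^ m := by
    rw [← pow_succ]; congr 1; omega
  exact Nat.eq_of_mul_eq_mul_right hp.pos (by rw [h, this])

lemma aux_centralizer_comm (hG : Nat.card G = p ^ m)
    (hZ : (Subgroup.center G).index = p ^ 2) {g : G} (hg : g ∉ Subgroup.center G) :
    IsMulCommutative (Subgroup.centralizer {g}) := by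
  have hp := (Fact.out : p.Prime)
  have hm := aux_two_le_m hG hZ
  set C := Subgroup.centralizer {g} with hC
  have hle : Subgroup.center G ≤ C := Subgroup.center_le_centralizer {g}
  set Z' := (Subgroup.center G).subgroupOf C with hZ'
  have hcardZ' : Nat.card Z' = p ^ (m - 2) := by
    rw [← aux_card_center hG hZ]
    exact Nat.card_congr (Subgroup.subgroupOfEquivOfLe hle).toEquiv
  have hcardQ : Nat.card (C ⧸ Z') = p := by
    have h1 := Subgroup.card_mul_index Z'
    rw [hcardZ', aux_centralizer_card hG hZ hg] at h1
    have h2 : p ^ (m - 2) * p = p ^ (m - 1) := by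
      rw [← pow_succ]; congr 1; omega
    rw [← Subgroup.index_eq_card]
    have hpos : 0 < p ^ (m - 2) := pow_pos hp.pos _
    apply Nat.eq_of_mul_eq_mul_left hpos
    rw [h1, h2]
  have : IsCyclic (C ⧸ Z') := by
    have : Fact p.Prime := ⟨hp⟩
    exact isCyclic_of_prime_card hcardQ
  have hker : (QuotientGroup.mk' Z').ker ≤ Subgroup.center C := by
    rw [QuotientGroup.ker_mk']
    rintro ⟨z, hzC⟩ hz
    rw [Subgroup.mem_subgroupOf] at hz
    rw [Subgroup.mem_center_iff]
    intro ⟨h, hh⟩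
    ext
    simpa using Subgroup.mem_center_iff.mp hz h
  exact ⟨⟨fun a b => commutative_of_cyclic_center_quotient (QuotientGroup.mk' Z') hker a b⟩⟩

end aux

noncomputable def aux_orbit_equiv (G : Type*) [Group G] (n : ℕ) :
    Quot (simulConjRel G n) ≃ Quotient (MulAction.orbitRel (ConjAct G) (Fin n → G)) :=
  Quot.congrRight (fun x y => by
    constructor
    · rintro ⟨g, hg⟩
      refine MulAction.mem_orbit_iff.mpr ⟨(ConjAct.toConjAct g)⁻¹, funext fun i => ?_⟩
      simp only [Pi.smul_apply, ConjAct.smul_def, map_inv, ConjAct.ofConjAct_toConjAct,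
        inv_inv, ← hg i]
      group
    · intro h
      obtain ⟨c, hc⟩ := MulAction.mem_orbit_iff.mp h
      refine ⟨(ConjAct.ofConjAct c)⁻¹, fun i => ?_⟩
      have := congrFun hc i
      rw [Pi.smul_apply, ConjAct.smul_def] at this
      rw [← this]
      group)

lemma aux_burnside (p m : ℕ) [Fact p.Prime] (G : Type*) [Group G] [Finite G]
    (hG : Nat.card G = p ^ m) (hZ : (Subgroup.center G).index = p ^ 2) (n : ℕ) :
    alphaCount G n * p ^ m =
      p ^ (m - 2) * (p ^ m) ^ n + (p ^ m - p ^ (m - 2)) * (p ^ (m - 1)) ^ n := by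
  classical
  have := Fintype.ofFinite G
  have hfix : ∀ a : ConjAct G, Fintype.card (MulAction.fixedBy (Fin n → G) a) =
      Nat.card (Subgroup.centralizer {ConjAct.ofConjAct a}) ^ n := by
    intro a
    have e : MulAction.fixedBy (Fin n → G) a ≃
        (Fin n → Subgroup.centralizer {ConjAct.ofConjAct a}) :=
      { toFun := fun x i => ⟨x.1 i, Subgroup.mem_centralizer_singleton_iff.mpr (by
          have h1 := congrFun (MulAction.mem_fixedBy.mp x.2) i
          rw [Pi.smul_apply, ConjAct.smul_def, mul_inv_eq_iff_eq_mul] at h1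
          exact h1.symm)⟩
        invFun := fun f => ⟨fun i => (f i : G), by
          rw [MulAction.mem_fixedBy]
          funext i
          rw [Pi.smul_apply, ConjAct.smul_def, mul_inv_eq_iff_eq_mul]
          exact (Subgroup.mem_centralizer_singleton_iff.mp (f i).2).symm⟩
        left_inv := fun x => rfl
        right_inv := fun f => rfl }
    rw [Fintype.card_congr e]
    simp [Nat.card_eq_fintype_card]
  have hburn := MulAction.sum_card_fixedBy_eq_card_orbits_mul_card_group (ConjAct G) (Fin n → G)
  have hsum : (∑ a : ConjAct G, Fintype.card (MulAction.fixedBy (Fin n → G) a))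
      = ∑ g : G, Nat.card (Subgroup.centralizer {g}) ^ n :=
    Fintype.sum_equiv ConjAct.ofConjAct.toEquiv _ _ (fun a => hfix a)
  have hval : ∀ g : G, Nat.card (Subgroup.centralizer {g}) ^ n =
      if g ∈ Subgroup.center G then (p ^ m) ^ n else (p ^ (m - 1)) ^ n := by
    intro g
    split_ifs with h
    · rw [show Subgroup.centralizer {g} = ⊤ from
        Subgroup.centralizer_eq_top_iff_subset.mpr (by simpa using h),
        Subgroup.card_top, hG]
    · rw [aux_centralizer_card hG hZ h]
  have hcenter_card : (Finset.univ.filter (· ∈ Subgroup.center G)).card = p ^ (m - 2) := by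
    rw [← Fintype.card_subtype, ← Nat.card_eq_fintype_card]
    exact aux_card_center hG hZ
  have hnot_card : (Finset.univ.filter (fun g => ¬ g ∈ Subgroup.center G)).card
      = p ^ m - p ^ (m - 2) := by
    have := Finset.card_filter_add_card_filter_not (s := (Finset.univ : Finset G))
      (p := (· ∈ Subgroup.center G))
    rw [hcenter_card, Finset.card_univ, ← Nat.card_eq_fintype_card, hG] at this
    omega
  have hsum2 : (∑ g : G, Nat.card (Subgroup.centralizer {g}) ^ n)
      = p ^ (m - 2) * (p ^ m) ^ n + (p ^ m - p ^ (m - 2)) * (p ^ (m - 1)) ^ n := by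
    rw [Finset.sum_congr rfl (fun g _ => hval g), Finset.sum_ite,
      Finset.sum_const, Finset.sum_const, smul_eq_mul, smul_eq_mul, hcenter_card, hnot_card]
  have halpha : alphaCount G n
      = Fintype.card (Quotient (MulAction.orbitRel (ConjAct G) (Fin n → G))) := by
    rw [alphaCount, Nat.card_congr (aux_orbit_equiv G n), Nat.card_eq_fintype_card]
  have hcg : Fintype.card (ConjAct G) = p ^ m := by
    rw [← Nat.card_eq_fintype_card]; exact hG
  rw [hsum, hsum2, hcg] at hburn
  rw [halpha]
  exact hburn.symm

theorem stmt_5 (p m : ℕ) [Fact p.Prime] (G : Type*) [Group G] [Finite G]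
    (hG : Nat.card G = p ^ m) (hZ : (Subgroup.center G).index = p ^ 2) :
    (∀ g : G, g ∉ Subgroup.center G →
        IsMulCommutative (Subgroup.centralizer {g}) ∧ (Subgroup.centralizer {g}).index = p) ∧
    ∀ n : ℕ,
      (alphaCount G n : ℚ) =
        (1 / (p : ℚ) ^ m) *
          ((p : ℚ) ^ (m - 2) * (p : ℚ) ^ (m * n) +
            ((p : ℚ) ^ m - (p : ℚ) ^ (m - 2)) * (p : ℚ) ^ ((m - 1) * n)) := by
  have hp := (Fact.out : p.Prime)
  have hm := aux_two_le_m hG hZ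
  refine ⟨fun g hg => ⟨aux_centralizer_comm hG hZ hg, aux_centralizer_index hG hZ hg⟩,
    fun n => ?_⟩
  have hb := aux_burnside p m G hG hZ n
  have hle : p ^ (m - 2) ≤ p ^ m := Nat.pow_le_pow_right hp.pos (by omega)
  have hP : (0 : ℚ) < (p : ℚ) ^ m := by
    have : (0 : ℚ) < (p : ℚ) := by exact_mod_cast hp.pos
    positivity
  have hcast := congrArg (Nat.cast : ℕ → ℚ) hb
  push_cast [Nat.cast_sub hle] at hcast
  rw [pow_mul, pow_mul, one_div, inv_mul_eq_div, eq_div_iff hP.ne']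
  exact hcast
end

section
/- Let G be a p-group of order p^m with |G/Z(G)| = p². Then the number β_{G,n} of simultaneous conjugacy classes of commuting n-tuples in G has generating function B_G(t) = (1 − p^{m−3} t) / ((1 − p^{m−2} t)(1 − p^{m−1} t)). -/
open Subgroup

/-- If `H ≤ K` are subgroups of a finite group with equal cardinality, they are equal. -/
lemma sub_eq_of_le_of_card_eq {G : Type*} [Group G] [Finite G] {H K : Subgroup G}
    (h : H ≤ K) (hc : Nat.card K ≤ Nat.card H) : H = K := by
  have : (H : Set G) = (K : Set G) := by
    apply Set.eq_of_subset_of_ncard_le h ?_ (Set.toFinite _)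
    rw [← Nat.card_coe_set_eq, ← Nat.card_coe_set_eq]; exact hc
  exact SetLike.ext' this

lemma centralizer_facts {p m : ℕ} (hp : p.Prime) {G : Type*} [Group G] [Finite G]
    (hG : Nat.card G = p ^ m) (hZ : (Subgroup.center G).index = p ^ 2) {x : G}
    (hx : x ∉ Subgroup.center G) :
    (Subgroup.centralizer {x}).index = p ∧
      ∀ a ∈ Subgroup.centralizer {x}, ∀ b ∈ Subgroup.centralizer {x}, a * b = b * a := by
  set Z := Subgroup.center G with hZdef
  set C := Subgroup.centralizer {x} with hCdef
  have hxC : x ∈ C := by simp [hCdef, Subgroup.mem_centralizer_singleton_iff]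
  have hZC : Z ≤ C := Subgroup.center_le_centralizer _
  set D := Z ⊔ Subgroup.zpowers x with hDdef
  have hZD : Z ≤ D := le_sup_left
  have hxD : x ∈ D := Subgroup.mem_sup_right (Subgroup.mem_zpowers x)
  have hDC : D ≤ C := sup_le hZC (Subgroup.zpowers_le.2 hxC)
  have hCtop : C ≠ ⊤ := by
    intro h
    apply hx
    rw [Subgroup.mem_center_iff]
    intro g
    have hg : g ∈ C := h ▸ Subgroup.mem_top g
    exact Subgroup.mem_centralizer_singleton_iff.1 hg
  have hcard0 : 0 < Nat.card G := Nat.card_pos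
  -- D ≠ Z
  have hDZ : D ≠ Z := fun h => hx (h ▸ hxD)
  -- index facts
  have hDdvd : D.index ∣ p ^ 2 := hZ ▸ Subgroup.index_dvd_of_le hZD
  have hCDdvd : C.index ∣ D.index := Subgroup.index_dvd_of_le hDC
  obtain ⟨k, hk2, hkeq⟩ := (Nat.dvd_prime_pow hp).1 hDdvd
  have hDne2 : D.index ≠ p ^ 2 := by
    intro h
    apply hDZ
    refine (sub_eq_of_le_of_card_eq hZD ?_).symm
    have h1 : Nat.card Z * Z.index = Nat.card G := Z.card_mul_index
    have h2 : Nat.card D * D.index = Nat.card G := D.card_mul_index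
    rw [hZ] at h1
    rw [h] at h2
    have hp2 : 0 < p ^ 2 := pow_pos hp.pos 2
    exact le_of_eq (Nat.eq_of_mul_eq_mul_right hp2 (h2.trans h1.symm))
  have hDne0 : D.index ≠ 1 := by
    intro h
    exact hCtop (top_le_iff.1 (Subgroup.index_eq_one.1 h ▸ hDC))
  interval_cases k
  · exact absurd (by simpa using hkeq) hDne0
  · -- D.index = p
    have hDp : D.index = p := by simpa using hkeq
    have hCp : C.index = p := by
      have h1 : C.index ∣ p := hDp ▸ hCDdvd
      rcases (Nat.Prime.eq_one_or_self_of_dvd hp _ h1) with h | h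
      · exact absurd (Subgroup.index_eq_one.1 h) hCtop
      · exact h
    have hDC' : D = C := by
      apply sub_eq_of_le_of_card_eq hDC
      have h1 : Nat.card D * D.index = Nat.card G := D.card_mul_index
      have h2 : Nat.card C * C.index = Nat.card G := C.card_mul_index
      rw [hDp] at h1; rw [hCp] at h2
      exact le_of_eq (Nat.eq_of_mul_eq_mul_right hp.pos (h2.trans h1.symm))
    refine ⟨hCp, ?_⟩
    -- commutativity: C = D ≤ centralizer C
    have hsub : D ≤ Subgroup.centralizer (C : Set G) := by
      apply sup_le
      · exact Subgroup.center_le_centralizer _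
      · rw [Subgroup.zpowers_le, Subgroup.mem_centralizer_iff]
        intro h hh
        exact Subgroup.mem_centralizer_singleton_iff.1 (SetLike.mem_coe.1 hh)
    intro a ha b hb
    have hb' : b ∈ D := by rw [hDC']; exact hb
    exact (Subgroup.mem_centralizer_iff.1 (hsub hb') a ha)
  · exact absurd (by simpa using hkeq) hDne2



lemma center_card_facts {p m : ℕ} (hp : p.Prime) {G : Type*} [Group G] [Finite G]
    (hG : Nat.card G = p ^ m) (hZ : (Subgroup.center G).index = p ^ 2) :
    3 ≤ m ∧ Nat.card (Subgroup.center G) = p ^ (m - 2) := by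
  have hdvd : p ^ 2 ∣ p ^ m := hG ▸ hZ ▸ (Subgroup.center G).index_dvd_card
  have hm2 : 2 ≤ m := (Nat.pow_dvd_pow_iff_le_right hp.one_lt).1 hdvd
  have h1 : Nat.card (Subgroup.center G) * p ^ 2 = p ^ m := by
    rw [← hZ, ← hG]; exact (Subgroup.center G).card_mul_index
  have h2 : p ^ (m - 2) * p ^ 2 = p ^ m := by
    rw [← pow_add]; congr 1; omega
  have hcard : Nat.card (Subgroup.center G) = p ^ (m - 2) :=
    Nat.eq_of_mul_eq_mul_right (pow_pos hp.pos 2) (h1.trans h2.symm)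
  have : Nontrivial G := by
    rw [← Finite.one_lt_card_iff_nontrivial, hG]
    calc 1 < p ^ 2 := Nat.one_lt_pow (by norm_num) hp.one_lt
      _ ≤ p ^ m := Nat.pow_le_pow_right hp.pos hm2
  have : Fact p.Prime := ⟨hp⟩
  have hpg : IsPGroup p G := IsPGroup.of_card hG
  have hZnt : Nontrivial (Subgroup.center G) := hpg.center_nontrivial
  have : 1 < p ^ (m - 2) := hcard ▸ Finite.one_lt_card_iff_nontrivial.2 hZnt
  constructor
  · by_contra h
    interval_cases m <;> simp_all
  · exact hcard


namespace CommTupleAux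

variable {G : Type*} [Group G] {n : ℕ}

instance instFinite [Finite G] : Finite (CommTuple G n) := Subtype.finite

instance : MulAction (ConjAct G) (CommTuple G n) where
  smul g x := ⟨g • x.1, fun i j => by
    have h := (x.2 i j).map (MulAut.conj (ConjAct.ofConjAct g)).toMonoidHom
    simpa [ConjAct.smul_def, Commute, SemiconjBy, MulAut.conj_apply, mul_assoc] using h⟩
  one_smul x := Subtype.ext (one_smul (ConjAct G) x.1)
  mul_smul g h x := Subtype.ext (mul_smul g h x.1)

lemma smul_coe (g : ConjAct G) (x : CommTuple G n) : (g • x).1 = g • x.1 := rfl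

lemma smul_coe_apply (g : ConjAct G) (x : CommTuple G n) (i : Fin n) :
    (g • x).1 i = ConjAct.ofConjAct g * x.1 i * (ConjAct.ofConjAct g)⁻¹ := rfl

lemma rel_iff (x y : CommTuple G n) :
    simulConjRel G n x.1 y.1 ↔ y ∈ MulAction.orbit (ConjAct G) x := by
  constructor
  · rintro ⟨g, hg⟩
    exact ⟨ConjAct.toConjAct g, Subtype.ext (funext fun i => hg i)⟩
  · rintro ⟨c, rfl⟩
    exact ⟨ConjAct.ofConjAct c, fun i => rfl⟩

noncomputable def quotEquiv :
    Quot (fun x y : CommTuple G n => simulConjRel G n x.1 y.1) ≃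
      Quotient (MulAction.orbitRel (ConjAct G) (CommTuple G n)) where
  toFun := Quot.lift (Quotient.mk _) (fun x y h =>
    Quotient.sound (MulAction.mem_orbit_symm.1 ((rel_iff x y).1 h)))
  invFun := Quotient.lift (Quot.mk _) (fun x y h =>
    Quot.sound ((rel_iff x y).2 (MulAction.mem_orbit_symm.1 h)))
  left_inv q := Quot.inductionOn q fun x => rfl
  right_inv q := Quotient.inductionOn q fun x => rfl

lemma betaCount_eq :
    betaCount G n = Nat.card (Quotient (MulAction.orbitRel (ConjAct G) (CommTuple G n))) :=
  Nat.card_congr quotEquiv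

/-- The centrality predicate on commuting tuples. -/
def Pc (x : CommTuple G n) : Prop := ∀ i, x.1 i ∈ Subgroup.center G

lemma smul_central {x : CommTuple G n} (hx : Pc x) (g : ConjAct G) : g • x = x := by
  apply Subtype.ext; funext i
  show ConjAct.ofConjAct g * x.1 i * (ConjAct.ofConjAct g)⁻¹ = x.1 i
  rw [Subgroup.mem_center_iff.1 (hx i) (ConjAct.ofConjAct g), mul_assoc, mul_inv_cancel, mul_one]

lemma orbit_central {x : CommTuple G n} (hx : Pc x) :
    MulAction.orbit (ConjAct G) x = {x} := by
  apply Set.eq_singleton_iff_unique_mem.2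
  exact ⟨MulAction.mem_orbit_self x, by rintro y ⟨c, rfl⟩; exact smul_central hx c⟩

lemma card_orbit_central {x : CommTuple G n} (hx : Pc x) :
    Nat.card (MulAction.orbit (ConjAct G) x) = 1 := by
  rw [orbit_central hx]; simp

/-- membership in the stabilizer is membership in the centralizer of a noncentral coordinate. -/
lemma stab_iff {x : CommTuple G n} {i : Fin n}
    (hcomm : ∀ a ∈ Subgroup.centralizer {x.1 i}, ∀ b ∈ Subgroup.centralizer {x.1 i}, a * b = b * a)
    (g : ConjAct G) :
    g ∈ MulAction.stabilizer (ConjAct G) x ↔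
      ConjAct.ofConjAct g ∈ Subgroup.centralizer {x.1 i} := by
  constructor
  · intro hg
    have := congrArg (fun y : CommTuple G n => y.1 i) hg
    have h2 : ConjAct.ofConjAct g * x.1 i * (ConjAct.ofConjAct g)⁻¹ = x.1 i := this
    rw [mul_inv_eq_iff_eq_mul] at h2
    exact Subgroup.mem_centralizer_singleton_iff.2 h2
  · intro hg
    apply Subtype.ext; funext j
    show ConjAct.ofConjAct g * x.1 j * (ConjAct.ofConjAct g)⁻¹ = x.1 j
    have hj : x.1 j ∈ Subgroup.centralizer {x.1 i} :=
      Subgroup.mem_centralizer_singleton_iff.2 (x.2 j i)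
    rw [hcomm _ hg _ hj, mul_assoc, mul_inv_cancel, mul_one]

noncomputable def stabEquiv {x : CommTuple G n} {i : Fin n}
    (hcomm : ∀ a ∈ Subgroup.centralizer {x.1 i}, ∀ b ∈ Subgroup.centralizer {x.1 i}, a * b = b * a) :
    MulAction.stabilizer (ConjAct G) x ≃ Subgroup.centralizer {x.1 i} where
  toFun g := ⟨ConjAct.ofConjAct g.1, (stab_iff hcomm g.1).1 g.2⟩
  invFun h := ⟨ConjAct.toConjAct h.1, (stab_iff hcomm _).2 h.2⟩
  left_inv g := rfl
  right_inv h := rfl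

/-- Central tuples are just tuples in the center. -/
def centralEquiv : {x : CommTuple G n // Pc x} ≃ (Fin n → Subgroup.center G) where
  toFun x i := ⟨x.1.1 i, x.2 i⟩
  invFun f := ⟨⟨fun i => (f i).1, fun i j =>
      (Subgroup.mem_center_iff.1 (f j).2 _)⟩, fun i => (f i).2⟩
  left_inv x := rfl
  right_inv f := rfl

/-- Extension equivalence for the recurrence. -/
def snocEquiv : CommTuple G (n + 1) ≃ Σ x : CommTuple G n, {g : G // ∀ j, Commute g (x.1 j)} where
  toFun y := ⟨⟨Fin.init y.1, fun i j => y.2 _ _⟩,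
    ⟨y.1 (Fin.last n), fun j => y.2 (Fin.last n) j.castSucc⟩⟩
  invFun z := ⟨Fin.snoc z.1.1 z.2.1, fun i j => by
    refine Fin.lastCases ?_ ?_ i <;> [skip; intro i'] <;>
      refine Fin.lastCases ?_ ?_ j <;> try intro j'
    · simp [Fin.snoc_last]
    · simp only [Fin.snoc_last, Fin.snoc_castSucc]
      exact z.2.2 j'
    · simp only [Fin.snoc_last, Fin.snoc_castSucc]
      exact (z.2.2 i').symm
    · simp only [Fin.snoc_castSucc]
      exact z.1.2 i' j'⟩
  left_inv y := Subtype.ext (Fin.snoc_init_self y.1)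
  right_inv z := by
    obtain ⟨⟨x, hx⟩, g, hg⟩ := z
    refine Sigma.ext (Subtype.ext ?_) ((Subtype.heq_iff_coe_eq ?_).2 ?_)
    · funext i; simp
    · intro c
      constructor <;> intro h j <;> have := h j <;> simpa using this
    · simp

namespace Count

open MulAction

variable {p m : ℕ} {G : Type*} [Group G] [Finite G]

instance uniqueCT : Unique (CommTuple G 0) where
  default := ⟨fun i => i.elim0, fun i => i.elim0⟩
  uniq x := Subtype.ext (funext fun i => i.elim0)

section withHyp

variable (hp : p.Prime) (hG : Nat.card G = p ^ m) (hZ : (Subgroup.center G).index = p ^ 2)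

include hp hG hZ

-- from earlier stages (assumed available): centralizer_facts, center_card_facts

lemma card_centralizer {x : G} (hx : x ∉ Subgroup.center G) :
    Nat.card (Subgroup.centralizer {x}) = p ^ (m - 1) := by
  obtain ⟨hidx, -⟩ := centralizer_facts hp hG hZ hx
  obtain ⟨hm3, -⟩ := center_card_facts hp hG hZ
  have h1 : Nat.card (Subgroup.centralizer {x}) * p = p ^ m := by
    rw [← hG, ← hidx]; exact Subgroup.card_mul_index _
  have h2 : p ^ (m - 1) * p = p ^ m := by rw [← pow_succ]; congr 1; omega
  exact Nat.eq_of_mul_eq_mul_right hp.pos (h1.trans h2.symm)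

lemma card_orbit_noncentral {n : ℕ} {x : CommTuple G n} (hx : ¬ Pc x) :
    Nat.card (MulAction.orbit (ConjAct G) x) = p := by
  obtain ⟨i, hi⟩ := not_forall.1 hx
  obtain ⟨-, hcomm⟩ := centralizer_facts hp hG hZ hi
  obtain ⟨hm3, -⟩ := center_card_facts hp hG hZ
  have hstab : Nat.card (MulAction.stabilizer (ConjAct G) x) = p ^ (m - 1) := by
    rw [Nat.card_congr (stabEquiv hcomm)]
    exact card_centralizer hp hG hZ hi
  have horb : Nat.card (MulAction.orbit (ConjAct G) x) *
      Nat.card (MulAction.stabilizer (ConjAct G) x) = Nat.card G := by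
    rw [← Nat.card_prod]
    exact Nat.card_congr (MulAction.orbitProdStabilizerEquivGroup (ConjAct G) x)
  rw [hstab, hG] at horb
  have h2 : p * p ^ (m - 1) = p ^ m := by rw [← pow_succ']; congr 1; omega
  have hpos : 0 < p ^ (m - 1) := pow_pos hp.pos _
  exact Nat.eq_of_mul_eq_mul_right hpos (horb.trans h2.symm)

lemma card_central_tuples {n : ℕ} :
    Nat.card {x : CommTuple G n // Pc x} = p ^ ((m - 2) * n) := by
  obtain ⟨-, hc⟩ := center_card_facts hp hG hZ
  rw [Nat.card_congr (centralEquiv (G := G) (n := n)), Nat.card_fun, hc,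
    Nat.card_eq_fintype_card, Fintype.card_fin, ← pow_mul]

lemma card_fiber_central {n : ℕ} {x : CommTuple G n} (hx : Pc x) :
    Nat.card {g : G // ∀ j, Commute g (x.1 j)} = p ^ m := by
  rw [← hG]
  apply Nat.card_congr
  apply Equiv.subtypeUnivEquiv
  intro g j
  exact Subgroup.mem_center_iff.1 (hx j) g

lemma card_fiber_noncentral {n : ℕ} {x : CommTuple G n} (hx : ¬ Pc x) :
    Nat.card {g : G // ∀ j, Commute g (x.1 j)} = p ^ (m - 1) := by
  obtain ⟨i, hi⟩ := not_forall.1 hx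
  obtain ⟨-, hcomm⟩ := centralizer_facts hp hG hZ hi
  rw [← card_centralizer hp hG hZ hi]
  apply Nat.card_congr
  refine ⟨fun g => ⟨g.1, Subgroup.mem_centralizer_singleton_iff.2 (g.2 i)⟩,
    fun h => ⟨h.1, fun j => ?_⟩, fun g => rfl, fun h => rfl⟩
  have hj : x.1 j ∈ Subgroup.centralizer {x.1 i} :=
    Subgroup.mem_centralizer_singleton_iff.2 (x.2 j i)
  exact hcomm _ h.2 _ hj

lemma card_commTuple (n : ℕ) :
    Nat.card (CommTuple G n) + p * p ^ ((m - 2) * n) = (p + 1) * p ^ ((m - 1) * n) := by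
  induction n with
  | zero => simp [Nat.card_unique]; omega
  | succ n ih =>
    classical
    obtain ⟨hm3, -⟩ := center_card_facts hp hG hZ
    haveI : Fintype (CommTuple G n) := Fintype.ofFinite _
    haveI : ∀ x : CommTuple G n, Fintype {g : G // ∀ j, Commute g (x.1 j)} :=
      fun x => Fintype.ofFinite _
    have hT : Nat.card (CommTuple G (n + 1)) =
        ∑ x : CommTuple G n, Nat.card {g : G // ∀ j, Commute g (x.1 j)} := by
      rw [Nat.card_congr (snocEquiv (G := G) (n := n)), Nat.card_eq_fintype_card,
        Fintype.card_sigma]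
      congr 1
      funext x
      rw [Nat.card_eq_fintype_card]
    have hT2 : Nat.card (CommTuple G (n + 1)) =
        ∑ x : CommTuple G n, (if Pc x then p ^ m else p ^ (m - 1)) := by
      rw [hT]
      apply Finset.sum_congr rfl
      intro x _
      by_cases hx : Pc x
      · rw [if_pos hx, card_fiber_central hp hG hZ hx]
      · rw [if_neg hx, card_fiber_noncentral hp hG hZ hx]
    set A := Finset.univ.filter (fun x : CommTuple G n => Pc x) with hA
    have hsplit : Nat.card (CommTuple G (n + 1)) =
        A.card * p ^ m + (Finset.univ.filter (fun x : CommTuple G n => ¬ Pc x)).card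
          * p ^ (m - 1) := by
      rw [hT2, Finset.sum_ite, Finset.sum_const, Finset.sum_const, smul_eq_mul, smul_eq_mul]
    have hAz : A.card = p ^ ((m - 2) * n) := by
      rw [← card_central_tuples hp hG hZ (n := n), Nat.card_eq_fintype_card,
        Fintype.card_subtype]
    set c := (Finset.univ.filter (fun x : CommTuple G n => ¬ Pc x)).card with hc
    have hTot : A.card + c = Nat.card (CommTuple G n) := by
      rw [Nat.card_eq_fintype_card, ← Finset.card_univ]
      exact Finset.card_filter_add_card_filter_not _
    -- arithmetic
    set z := p ^ ((m - 2) * n)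
    set B := p ^ ((m - 1) * n)
    have e1 : p ^ ((m - 2) * (n + 1)) = z * p ^ (m - 2) := by
      rw [Nat.mul_succ, pow_add]
    have e2 : p ^ ((m - 1) * (n + 1)) = B * p ^ (m - 1) := by
      rw [Nat.mul_succ, pow_add]
    have e3 : p ^ m = p * p ^ (m - 1) := by rw [← pow_succ']; congr 1; omega
    have e4 : p * p ^ (m - 2) = p ^ (m - 1) := by rw [← pow_succ']; congr 1; omega
    have hTn : Nat.card (CommTuple G n) = z + c := by rw [← hTot, hAz]
    rw [hTn] at ih
    -- goal
    rw [hsplit, hAz, e1, e2, e3]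
    -- now: z * (p * p^(m-1)) + c * p^(m-1) + p * (z * p^(m-2)) = (p+1) * (B * p^(m-1))
    have : z * (p * p ^ (m - 1)) + c * p ^ (m - 1) + p * (z * p ^ (m - 2)) =
        (z + c + p * z) * p ^ (m - 1) := by
      rw [show p * (z * p ^ (m - 2)) = z * (p * p ^ (m - 2)) by ring, e4]; ring
    rw [this, ih]; ring

end withHyp
end Count

section Beta
variable {p m : ℕ} {G : Type*} [Group G] [Finite G]
variable (hp : p.Prime) (hG : Nat.card G = p ^ m) (hZ : (Subgroup.center G).index = p ^ 2)

open MulAction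

include hp hG hZ in
lemma beta_eq (n : ℕ) :
    p * betaCount G n + p ^ ((m - 2) * n) = (p + 1) * p ^ ((m - 1) * n) := by
  classical
  letI s := MulAction.orbitRel (ConjAct G) (CommTuple G n)
  haveI : Fintype (CommTuple G n) := Fintype.ofFinite _
  haveI : Fintype (Quotient s) := Fintype.ofFinite _
  haveI : ∀ ω : Quotient s, Fintype (MulAction.orbit (ConjAct G) ω.out) :=
    fun ω => Fintype.ofFinite _
  have hβ : betaCount G n = Nat.card (Quotient s) := betaCount_eq
  -- total count as sum over orbits
  have hT : Nat.card (CommTuple G n) =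
      ∑ ω : Quotient s, Nat.card (MulAction.orbit (ConjAct G) ω.out) := by
    rw [Nat.card_congr (MulAction.selfEquivSigmaOrbits (ConjAct G) (CommTuple G n)),
      Nat.card_eq_fintype_card, Fintype.card_sigma]
    congr 1
    funext ω
    rw [Nat.card_eq_fintype_card]
  have horb : ∀ ω : Quotient s,
      Nat.card (MulAction.orbit (ConjAct G) ω.out) = if Pc ω.out then 1 else p := by
    intro ω
    by_cases h : Pc ω.out
    · rw [if_pos h, card_orbit_central h]
    · rw [if_neg h, Count.card_orbit_noncentral hp hG hZ h]
  -- singleton classes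
  have hsing : ∀ x : CommTuple G n, Pc x → (⟦x⟧ : Quotient s).out = x := by
    intro x hx
    have h := Quotient.mk_out (s := s) x
    have h2 : (⟦x⟧ : Quotient s).out ∈ MulAction.orbit (ConjAct G) x := h
    rwa [orbit_central hx, Set.mem_singleton_iff] at h2
  have hequiv : {x : CommTuple G n // Pc x} ≃ {ω : Quotient s // Pc ω.out} :=
    { toFun := fun x => ⟨⟦x.1⟧, by rw [hsing _ x.2]; exact x.2⟩
      invFun := fun ω => ⟨ω.1.out, ω.2⟩
      left_inv := fun x => Subtype.ext (hsing _ x.2)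
      right_inv := fun ω => Subtype.ext (Quotient.out_eq _) }
  set a := (Finset.univ.filter (fun ω : Quotient s => Pc ω.out)).card with ha_def
  set c := (Finset.univ.filter (fun ω : Quotient s => ¬ Pc ω.out)).card with hc_def
  have ha : a = p ^ ((m - 2) * n) := by
    rw [ha_def, ← Fintype.card_subtype, ← Nat.card_eq_fintype_card,
      ← Nat.card_congr hequiv, Count.card_central_tuples hp hG hZ]
  have hac : a + c = Nat.card (Quotient s) := by
    rw [Nat.card_eq_fintype_card, ← Finset.card_univ]
    exact Finset.card_filter_add_card_filter_not _
  have hsum : Nat.card (CommTuple G n) = a + c * p := by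
    rw [hT]
    have : ∀ ω : Quotient s, Nat.card (MulAction.orbit (ConjAct G) ω.out)
        = if Pc ω.out then 1 else p := horb
    rw [Finset.sum_congr rfl (fun ω _ => horb ω), Finset.sum_ite, Finset.sum_const,
      Finset.sum_const, smul_eq_mul, smul_eq_mul, mul_one]
  have hcc := Count.card_commTuple hp hG hZ (G := G) n
  rw [hsum, ha] at hcc
  rw [hβ, ← hac, ← hcc, ha]; ring

end Beta
end CommTupleAux

open PowerSeries

lemma geom_mul (r : ℚ) :
    (PowerSeries.mk fun n => r ^ n) * (1 - C r * X) = 1 := by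
  have hassoc : (PowerSeries.mk fun n => r ^ n) * (C r * X) =
      ((PowerSeries.mk fun n => r ^ n) * C r) * X := by ring
  ext n
  rw [mul_sub, mul_one, map_sub, hassoc]
  cases n with
  | zero => simp [coeff_mk]
  | succ n =>
    rw [coeff_succ_mul_X, coeff_mul_C, coeff_mk, coeff_mk, coeff_one]
    simp [pow_succ, mul_comm]

open PowerSeries in

theorem stmt_6 (p m : ℕ) [Fact p.Prime] (G : Type*) [Group G] [Finite G]
    (hG : Nat.card G = p ^ m) (hZ : (Subgroup.center G).index = p ^ 2) :
    PowerSeries.mk (fun n => (betaCount G n : ℚ)) =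
      (1 - C ((p : ℚ) ^ (m - 3)) * X) *
        ((1 - C ((p : ℚ) ^ (m - 2)) * X)⁻¹ * (1 - C ((p : ℚ) ^ (m - 1)) * X)⁻¹) := by
  classical
  have hp : p.Prime := Fact.out
  obtain ⟨hm3, -⟩ := center_card_facts hp hG hZ
  have hp0 : (p : ℚ) ≠ 0 := Nat.cast_ne_zero.2 hp.pos.ne'
  set a : ℚ := (p : ℚ) ^ (m - 2) with ha_def
  set b : ℚ := (p : ℚ) ^ (m - 1) with hb_def
  set c : ℚ := (p : ℚ) ^ (m - 3) with hc_def
  have hab : b = a * p := by rw [hb_def, ha_def, ← pow_succ]; congr 1; omega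
  have hca : a = c * p := by rw [ha_def, hc_def, ← pow_succ]; congr 1; omega
  have key : ∀ n : ℕ, (p : ℚ) * (betaCount G n : ℚ) + a ^ n = ((p : ℚ) + 1) * b ^ n := by
    intro n
    have h := CommTupleAux.beta_eq hp hG hZ n
    have h2 := congrArg (Nat.cast : ℕ → ℚ) h
    push_cast at h2
    rw [pow_mul, pow_mul] at h2
    exact h2
  set Ga : PowerSeries ℚ := PowerSeries.mk fun n => a ^ n with hGa_def
  set Gb : PowerSeries ℚ := PowerSeries.mk fun n => b ^ n with hGb_def
  have hGa : Ga * (1 - C a * X) = 1 := geom_mul a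
  have hGb : Gb * (1 - C b * X) = 1 := geom_mul b
  have hconsta : constantCoeff (1 - C a * X) ≠ 0 := by simp
  have hconstb : constantCoeff (1 - C b * X) ≠ 0 := by simp
  have hain : (1 - C a * X)⁻¹ = Ga :=
    ((PowerSeries.eq_inv_iff_mul_eq_one hconsta).2 hGa).symm
  have hbin : (1 - C b * X)⁻¹ = Gb :=
    ((PowerSeries.eq_inv_iff_mul_eq_one hconstb).2 hGb).symm
  rw [hain, hbin]
  have hune : (1 - C a * X) ≠ 0 := by
    intro h
    exact hconsta (by rw [h, map_zero])
  have hvne : (1 - C b * X) ≠ 0 := by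
    intro h
    exact hconstb (by rw [h, map_zero])
  apply mul_right_cancel₀ (mul_ne_zero hune hvne)
  have hR : (1 - C c * X) * (Ga * Gb) * ((1 - C a * X) * (1 - C b * X)) =
      1 - C c * X := by
    calc (1 - C c * X) * (Ga * Gb) * ((1 - C a * X) * (1 - C b * X))
        = (1 - C c * X) * ((Ga * (1 - C a * X)) * (Gb * (1 - C b * X))) := by ring
      _ = 1 - C c * X := by rw [hGa, hGb]; ring
  rw [hR]
  have hmk : PowerSeries.mk (fun n => (betaCount G n : ℚ)) =
      C (R := ℚ) (((p : ℚ) + 1) / p) * Gb - C (R := ℚ) (1 / p) * Ga := by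
    ext n
    rw [map_sub, coeff_C_mul, coeff_C_mul, hGa_def, hGb_def, coeff_mk, coeff_mk, coeff_mk]
    have h := key n
    field_simp
    linarith
  rw [hmk]
  calc (C (R := ℚ) (((p : ℚ) + 1) / p) * Gb - C (R := ℚ) (1 / p) * Ga) *
        ((1 - C a * X) * (1 - C b * X))
      = C (R := ℚ) (((p : ℚ) + 1) / p) * (Gb * (1 - C b * X)) * (1 - C a * X) -
          C (R := ℚ) (1 / p) * (Ga * (1 - C a * X)) * (1 - C b * X) := by ring
    _ = C (R := ℚ) (((p : ℚ) + 1) / p) * (1 - C a * X) - C (R := ℚ) (1 / p) * (1 - C b * X) := by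
        rw [hGa, hGb]; ring
    _ = (C (R := ℚ) (((p : ℚ) + 1) / p) - C (R := ℚ) (1 / p)) -
          (C ((((p : ℚ) + 1) / p) * a) - C ((1 / p) * b)) * X := by
        rw [map_mul, map_mul]; ring
    _ = 1 - C c * X := by
        rw [← map_sub, ← map_sub]
        have h1 : ((p : ℚ) + 1) / p - 1 / p = 1 := by field_simp; ring
        have h2 : (((p : ℚ) + 1) / p) * a - (1 / p) * b = c := by
          rw [hab, hca]; field_simp; ring
        rw [h1, h2, map_one]
end

section
/- Let G be a p-group of order p^m with |G/Z(G)| = p³ such that G has no abelian maximal subgroup. Then α_{G,n} = (1/p^m)(p^{m−3} · p^{mn} + (p^m − p^{m−3}) · p^{(m−2)n}) for all n ≥ 0. -/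
open Subgroup

section aux
variable {p m : ℕ} [Fact p.Prime] {G : Type*} [Group G] [Finite G]

lemma aux_lt_card {H K : Subgroup G} (hle : H ≤ K) {g : G} (hg : g ∈ K) (hg' : g ∉ H) :
    Nat.card H < Nat.card K := by
  rcases lt_or_ge (Nat.card H) (Nat.card K) with h | h
  · exact h
  · exact absurd (Subgroup.eq_of_le_of_card_ge hle h ▸ hg) hg'

lemma aux_comm (hG : Nat.card G = p ^ m) (hm : 3 ≤ m)
    (hZcard : Nat.card (Subgroup.center G) = p ^ (m - 3))
    {g : G} (hg : g ∉ Subgroup.center G)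
    (hidx : (Subgroup.centralizer {g}).index = p) :
    IsMulCommutative (Subgroup.centralizer ({g} : Set G)) := by
  have hp := (Fact.out : p.Prime)
  set C := Subgroup.centralizer ({g} : Set G) with hC
  have hCcard : Nat.card C = p ^ (m - 1) := by
    have h1 : C.index * Nat.card C = p ^ m := by rw [C.index_mul_card, hG]
    rw [hidx] at h1
    have : p * Nat.card C = p * p ^ (m - 1) := by
      rw [h1, ← pow_succ']
      congr 1
      omega
    exact Nat.eq_of_mul_eq_mul_left hp.pos this
  set Z' : Subgroup C := (Subgroup.center G).subgroupOf C with hZ'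
  have hZ'card : Nat.card Z' = p ^ (m - 3) := by
    rw [← hZcard]
    exact Nat.card_congr
      (Subgroup.subgroupOfEquivOfLe (Subgroup.center_le_centralizer {g})).toEquiv
  have hZ'idx : Z'.index = p ^ 2 := by
    have h1 : Z'.index * Nat.card Z' = p ^ (m - 1) := by rw [Z'.index_mul_card, hCcard]
    rw [hZ'card] at h1
    have h2 : p ^ 2 * p ^ (m - 3) = p ^ (m - 1) := by
      rw [← pow_add]; congr 1; omega
    have := h1.trans h2.symm
    exact Nat.eq_of_mul_eq_mul_right (pow_pos hp.pos _) this
  have hle : Z' ≤ Subgroup.center C := by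
    rintro ⟨x, hxC⟩ hx
    have hx' : x ∈ Subgroup.center G := hx
    rw [Subgroup.mem_center_iff]
    intro c
    ext
    exact Subgroup.mem_center_iff.mp hx' c
  have hgC : g ∈ C := by rw [hC, Subgroup.mem_centralizer_singleton_iff]
  have hg'center : (⟨g, hgC⟩ : C) ∈ Subgroup.center C := by
    rw [Subgroup.mem_center_iff]
    intro c
    ext
    exact Subgroup.mem_centralizer_singleton_iff.mp c.2
  have hg'notZ' : (⟨g, hgC⟩ : C) ∉ Z' := by
    intro h
    exact hg h
  have hcenterlt : Nat.card Z' < Nat.card (Subgroup.center C) :=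
    aux_lt_card hle hg'center hg'notZ'
  have hdvd : (Subgroup.center C).index ∣ p ^ 2 := hZ'idx ▸ Subgroup.index_dvd_of_le hle
  have hne : (Subgroup.center C).index ≠ p ^ 2 := by
    intro h
    have h1 : (Subgroup.center C).index * Nat.card (Subgroup.center C) = p ^ (m - 1) := by
      rw [Subgroup.index_mul_card, hCcard]
    have h2 : Z'.index * Nat.card Z' = p ^ (m - 1) := by
      rw [Subgroup.index_mul_card, hCcard]
    rw [h] at h1
    rw [hZ'idx] at h2
    have := h1.trans h2.symm
    have := Nat.eq_of_mul_eq_mul_left (pow_pos hp.pos 2) this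
    omega
  have hdvd' : (Subgroup.center C).index ∣ p := by
    obtain ⟨i, hi, hieq⟩ := (Nat.dvd_prime_pow hp).mp hdvd
    interval_cases i
    · simp [hieq]
    · simp [hieq]
    · exact absurd hieq hne
  have hcard_quot : Nat.card (C ⧸ Subgroup.center C) ∣ p := hdvd'
  have : IsCyclic (C ⧸ Subgroup.center C) := by
    rcases (Nat.Prime.eq_one_or_self_of_dvd hp _ hcard_quot) with h | h
    · have : Subsingleton (C ⧸ Subgroup.center C) := Nat.card_eq_one_iff_unique.mp h |>.1
      infer_instance
    · exact isCyclic_of_prime_card h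
  constructor
  constructor
  intro a b
  exact commutative_of_cyclic_center_quotient (QuotientGroup.mk' (Subgroup.center C))
    (by rw [QuotientGroup.ker_mk']) a b

lemma aux_card_centralizer (hG : Nat.card G = p ^ m)
    (hZ : (Subgroup.center G).index = p ^ 3)
    (hnoab : ∀ H : Subgroup G, H.index = p → ¬IsMulCommutative H) {g : G}
    (hg : g ∉ Subgroup.center G) :
    Nat.card (Subgroup.centralizer ({g} : Set G)) = p ^ (m - 2) := by
  have hp := (Fact.out : p.Prime)
  have hm : 3 ≤ m := by
    have h := Subgroup.index_dvd_card (H := Subgroup.center G)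
    rw [hZ, hG] at h
    exact (Nat.pow_dvd_pow_iff_le_right hp.one_lt).mp h
  have hZcard : Nat.card (Subgroup.center G) = p ^ (m - 3) := by
    have h1 : (Subgroup.center G).index * Nat.card (Subgroup.center G) = p ^ m := by
      rw [Subgroup.index_mul_card, hG]
    rw [hZ] at h1
    have h2 : p ^ 3 * p ^ (m - 3) = p ^ m := by rw [← pow_add]; congr 1; omega
    exact Nat.eq_of_mul_eq_mul_left (pow_pos hp.pos _) (h1.trans h2.symm)
  set C := Subgroup.centralizer ({g} : Set G) with hC
  have hle : Subgroup.center G ≤ C := Subgroup.center_le_centralizer {g}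
  have hgC : g ∈ C := by rw [hC, Subgroup.mem_centralizer_singleton_iff]
  have hlt : Nat.card (Subgroup.center G) < Nat.card C := aux_lt_card hle hgC hg
  have hdvd : C.index ∣ p ^ 3 := hZ ▸ Subgroup.index_dvd_of_le hle
  have h1 : C.index * Nat.card C = p ^ m := by rw [Subgroup.index_mul_card, hG]
  have h2 : (Subgroup.center G).index * Nat.card (Subgroup.center G) = p ^ m := by
    rw [Subgroup.index_mul_card, hG]
  have hne3 : C.index ≠ p ^ 3 := by
    intro h
    rw [h] at h1
    rw [hZ] at h2
    nlinarith [pow_pos hp.pos 3]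
  have hne0 : C.index ≠ p ^ 0 := by
    intro h
    simp only [pow_zero, Subgroup.index_eq_one] at h
    apply hg
    have : ({g} : Set G) ⊆ Subgroup.center G := by
      rw [← Subgroup.centralizer_eq_top_iff_subset]; exact h
    simpa using this
  have hne1 : C.index ≠ p ^ 1 := by
    intro h
    rw [pow_one] at h
    exact hnoab C h (aux_comm hG hm hZcard hg h)
  have hidx : C.index = p ^ 2 := by
    obtain ⟨i, hi, hieq⟩ := (Nat.dvd_prime_pow hp).mp hdvd
    interval_cases i
    · exact absurd hieq hne0
    · exact absurd hieq hne1
    · exact hieq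
    · exact absurd hieq hne3
  rw [hidx] at h1
  have h3 : p ^ 2 * p ^ (m - 2) = p ^ m := by rw [← pow_add]; congr 1; omega
  exact Nat.eq_of_mul_eq_mul_left (pow_pos hp.pos _) (h1.trans h3.symm)

end aux

noncomputable def fixedBy_equiv (G : Type*) [Group G] (n : ℕ) (a : ConjAct G) :
    MulAction.fixedBy (Fin n → G) a ≃
      (Fin n → Subgroup.centralizer ({ConjAct.ofConjAct a} : Set G)) := by
  refine (Equiv.subtypeEquivRight ?_).trans Equiv.subtypePiEquivPi
  intro x
  rw [MulAction.mem_fixedBy, funext_iff]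
  apply forall_congr'
  intro i
  rw [Pi.smul_apply, ConjAct.smul_def, mul_inv_eq_iff_eq_mul,
    Subgroup.mem_centralizer_singleton_iff]
  exact eq_comm

lemma simulConjRel_iff (G : Type*) [Group G] (n : ℕ) (x y : Fin n → G) :
    simulConjRel G n x y ↔ y ∈ MulAction.orbit (ConjAct G) x := by
  constructor
  · rintro ⟨g, hg⟩
    exact ⟨ConjAct.toConjAct g, funext fun i => by
      simp only [Pi.smul_apply, ConjAct.smul_def, ConjAct.ofConjAct_toConjAct]
      exact hg i⟩
  · rintro ⟨a, rfl⟩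
    exact ⟨ConjAct.ofConjAct a, fun i => by
      simp only [Pi.smul_apply, ConjAct.smul_def]⟩

lemma simulConjRel_symm (G : Type*) [Group G] (n : ℕ) {x y : Fin n → G}
    (h : simulConjRel G n x y) : simulConjRel G n y x := by
  obtain ⟨g, hg⟩ := h
  exact ⟨g⁻¹, fun i => by rw [← hg i]; group⟩

lemma aux_burnside_s7 (G : Type*) [Group G] [Fintype G] (n : ℕ) :
    alphaCount G n * Nat.card G =
      ∑ g : G, Nat.card (Subgroup.centralizer ({g} : Set G)) ^ n := by
  classical
  letI : Fintype (ConjAct G) := ‹Fintype G›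
  letI : ∀ a : ConjAct G, Fintype (MulAction.fixedBy (Fin n → G) a) :=
    fun a => Fintype.ofFinite _
  letI : Fintype (MulAction.orbitRel.Quotient (ConjAct G) (Fin n → G)) := Fintype.ofFinite _
  have halpha : alphaCount G n =
      Nat.card (MulAction.orbitRel.Quotient (ConjAct G) (Fin n → G)) := by
    apply Nat.card_congr
    apply Quot.congr (Equiv.refl _)
    intro a b
    simp only [Equiv.refl_apply]
    rw [show (MulAction.orbitRel (ConjAct G) (Fin n → G)).r a b ↔
        a ∈ MulAction.orbit (ConjAct G) b from Iff.rfl]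
    constructor
    · intro h
      exact (simulConjRel_iff G n b a).mp (simulConjRel_symm G n h)
    · intro h
      exact simulConjRel_symm G n ((simulConjRel_iff G n b a).mpr h)
  have hb := MulAction.sum_card_fixedBy_eq_card_orbits_mul_card_group (ConjAct G) (Fin n → G)
  have hfix : ∀ a : ConjAct G, Fintype.card (MulAction.fixedBy (Fin n → G) a) =
      Nat.card (Subgroup.centralizer ({ConjAct.ofConjAct a} : Set G)) ^ n := by
    intro a
    rw [← Nat.card_eq_fintype_card, Nat.card_congr (fixedBy_equiv G n a), Nat.card_fun]
    simp
  rw [Finset.sum_congr rfl (fun a _ => hfix a)] at hb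
  have hre : ∑ a : ConjAct G, Nat.card
        (Subgroup.centralizer ({ConjAct.ofConjAct a} : Set G)) ^ n =
      ∑ g : G, Nat.card (Subgroup.centralizer ({g} : Set G)) ^ n :=
    Equiv.sum_comp (ConjAct.ofConjAct (G := G)).toEquiv
      (fun g => Nat.card (Subgroup.centralizer ({g} : Set G)) ^ n)
  rw [hre] at hb
  rw [halpha,
    Nat.card_eq_fintype_card (α := MulAction.orbitRel.Quotient (ConjAct G) (Fin n → G)),
    show Nat.card G = Fintype.card (ConjAct G) from Nat.card_eq_fintype_card]
  exact hb.symm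


theorem stmt_7 (p m : ℕ) [Fact p.Prime] (G : Type*) [Group G] [Finite G]
    (hG : Nat.card G = p ^ m) (hZ : (Subgroup.center G).index = p ^ 3)
    (hnoab : ∀ H : Subgroup G, H.index = p → ¬IsMulCommutative H) :
    ∀ n : ℕ,
      (alphaCount G n : ℚ) =
        (1 / (p : ℚ) ^ m) *
          ((p : ℚ) ^ (m - 3) * (p : ℚ) ^ (m * n) +
            ((p : ℚ) ^ m - (p : ℚ) ^ (m - 3)) * (p : ℚ) ^ ((m - 2) * n)) := by
  classical
  intro n
  have hp := (Fact.out : p.Prime)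
  letI : Fintype G := Fintype.ofFinite G
  have hm : 3 ≤ m := by
    have h := Subgroup.index_dvd_card (H := Subgroup.center G)
    rw [hZ, hG] at h
    exact (Nat.pow_dvd_pow_iff_le_right hp.one_lt).mp h
  have hZcard : Nat.card (Subgroup.center G) = p ^ (m - 3) := by
    have h1 : (Subgroup.center G).index * Nat.card (Subgroup.center G) = p ^ m := by
      rw [Subgroup.index_mul_card, hG]
    rw [hZ] at h1
    have h2 : p ^ 3 * p ^ (m - 3) = p ^ m := by rw [← pow_add]; congr 1; omega
    exact Nat.eq_of_mul_eq_mul_left (pow_pos hp.pos _) (h1.trans h2.symm)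
  have hcent : ∀ g : G, Nat.card (Subgroup.centralizer ({g} : Set G)) ^ n
      = if g ∈ Subgroup.center G then p ^ (m * n) else p ^ ((m - 2) * n) := by
    intro g
    by_cases hg : g ∈ Subgroup.center G
    · rw [if_pos hg]
      have h : Subgroup.centralizer ({g} : Set G) = ⊤ := by
        rw [Subgroup.centralizer_eq_top_iff_subset]; simpa using hg
      rw [h, Subgroup.card_top, hG, ← pow_mul]
    · rw [if_neg hg, aux_card_centralizer hG hZ hnoab hg, ← pow_mul]
  have hc1 : (Finset.univ.filter (fun g : G => g ∈ Subgroup.center G)).card = p ^ (m - 3) := by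
    rw [← hZcard, Nat.card_eq_fintype_card, Fintype.card_subtype]
  have hc2 : (Finset.univ.filter (fun g : G => ¬ g ∈ Subgroup.center G)).card
      = p ^ m - p ^ (m - 3) := by
    have h := Finset.card_filter_add_card_filter_not (s := (Finset.univ : Finset G))
      (p := fun g : G => g ∈ Subgroup.center G)
    rw [Finset.card_univ, ← Nat.card_eq_fintype_card, hG, hc1] at h
    omega
  have hsum : ∑ g : G, Nat.card (Subgroup.centralizer ({g} : Set G)) ^ n
      = p ^ (m - 3) * p ^ (m * n) + (p ^ m - p ^ (m - 3)) * p ^ ((m - 2) * n) := by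
    rw [Finset.sum_congr rfl (fun g _ => hcent g), Finset.sum_ite, Finset.sum_const,
      Finset.sum_const, smul_eq_mul, smul_eq_mul, hc1, hc2]
  have hb := aux_burnside_s7 G n
  rw [hsum, hG] at hb
  -- now pass to ℚ
  have hple : p ^ (m - 3) ≤ p ^ m := Nat.pow_le_pow_right hp.pos (by omega)
  have hq : (alphaCount G n : ℚ) * (p : ℚ) ^ m =
      (p : ℚ) ^ (m - 3) * (p : ℚ) ^ (m * n) +
        ((p : ℚ) ^ m - (p : ℚ) ^ (m - 3)) * (p : ℚ) ^ ((m - 2) * n) := by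
    have := congrArg (fun k : ℕ => (k : ℚ)) hb
    push_cast [Nat.cast_sub hple] at this
    convert this using 2
  have hpow : ((p : ℚ) ^ m) ≠ 0 := by
    have : (0 : ℚ) < (p : ℚ) := by exact_mod_cast hp.pos
    positivity
  rw [one_div, inv_mul_eq_div, eq_div_iff hpow]
  exact hq
end

section
/- Let G be a p-group of maximal class of order p^m (m ≥ 4) with positive degree of commutativity, let P_1 be the 2-step centralizer (the centralizer in G of γ_2(G)/γ_4(G)), and let s ∈ G \ P_1. Then the centralizer of s in G equals ⟨s⟩ · Z(G) and has order p². -/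
open Subgroup
open scoped commutatorElement

section AuxMC
variable {G : Type*} [Group G]

lemma auxMC_conj_comm (a b : G) : a⁻¹ * b⁻¹ * a * b = (b * a)⁻¹ * ⁅a, b⁆ * (b * a) := by
  simp only [commutatorElement_def]; group

lemma auxMC_mem_iff (N : Subgroup G) [hN : N.Normal] (a b : G) :
    ⁅a, b⁆ ∈ N ↔ a⁻¹ * b⁻¹ * a * b ∈ N := by
  rw [auxMC_conj_comm]
  constructor
  · intro h; exact hN.conj_mem' _ h _
  · intro h
    have := hN.conj_mem _ h (b * a)
    simpa [mul_assoc] using this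

lemma auxMC_closure_comm (N : Subgroup G) [hN : N.Normal] {T T' : Set G}
    (h : ∀ a ∈ T, ∀ b ∈ T', ⁅a, b⁆ ∈ N) :
    ∀ a ∈ Subgroup.closure T, ∀ b ∈ Subgroup.closure T', ⁅a, b⁆ ∈ N := by
  have inner : ∀ a ∈ T, ∀ b ∈ Subgroup.closure T', ⁅a, b⁆ ∈ N := by
    intro a ha b hb
    induction hb using closure_induction with
    | mem x hx => exact h a ha x hx
    | one => simpa only [commutatorElement_def, mul_one, inv_one, mul_inv_cancel] using N.one_mem
    | mul x y hx hy ihx ihy =>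
        have key : ⁅a, x * y⁆ = ⁅a, x⁆ * (x * ⁅a, y⁆ * x⁻¹) := by
          simp only [commutatorElement_def]; group
        rw [key]; exact N.mul_mem ihx (hN.conj_mem _ ihy x)
    | inv x hx ihx =>
        have key : ⁅a, x⁻¹⁆ = x⁻¹ * ⁅a, x⁆⁻¹ * x := by
          simp only [commutatorElement_def]; group
        rw [key]; exact hN.conj_mem' _ (N.inv_mem ihx) x
  intro a ha b hb
  induction ha using closure_induction with
  | mem x hx => exact inner x hx b hb
  | one => simpa only [commutatorElement_def, one_mul, inv_one, mul_inv_cancel,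
      mul_one] using N.one_mem
  | mul x y hx hy ihx ihy =>
      have key : ⁅x * y, b⁆ = (x * ⁅y, b⁆ * x⁻¹) * ⁅x, b⁆ := by
        simp only [commutatorElement_def]; group
      rw [key]; exact N.mul_mem (hN.conj_mem _ ihy x) ihx
  | inv x hx ihx =>
      have key : ⁅x⁻¹, b⁆ = x⁻¹ * ⁅x, b⁆⁻¹ * x := by
        simp only [commutatorElement_def]; group
      rw [key]; exact hN.conj_mem' _ (N.inv_mem ihx) x

lemma auxMC_eq_of_le_of_card_le [Finite G] {H K : Subgroup G} (h : H ≤ K)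
    (hc : Nat.card K ≤ Nat.card H) : H = K := by
  have h1 : Nat.card H = (H : Set G).ncard := (Nat.card_coe_set_eq _).symm ▸ rfl
  have h2 : Nat.card K = (K : Set G).ncard := (Nat.card_coe_set_eq _).symm ▸ rfl
  have := Set.eq_of_subset_of_ncard_le (show (H : Set G) ⊆ K from h)
    (by rw [← h1, ← h2]; exact hc) (Set.toFinite _)
  exact SetLike.coe_injective this

lemma auxMC_card_lt [Finite G] {H K : Subgroup G} (h : H < K) :
    Nat.card H < Nat.card K := by
  have h1 : Nat.card H = (H : Set G).ncard := (Nat.card_coe_set_eq _).symm ▸ rfl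
  have h2 : Nat.card K = (K : Set G).ncard := (Nat.card_coe_set_eq _).symm ▸ rfl
  rw [h1, h2]
  exact Set.ncard_lt_ncard (by exact_mod_cast SetLike.coe_ssubset_coe.2 h) (Set.toFinite _)

lemma auxMC_gen_step {p : ℕ} (hp : p.Prime) [Finite G] {A B : Subgroup G}
    (hle : B ≤ A) (hcard : Nat.card A = p * Nat.card B)
    {x : G} (hxA : x ∈ A) (hxB : x ∉ B) :
    Subgroup.closure ({x} ∪ (B : Set G)) = A := by
  set H := Subgroup.closure ({x} ∪ (B : Set G)) with hH
  have hBH : B ≤ H := fun b hb => subset_closure (Set.mem_union_right _ hb)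
  have hxH : x ∈ H := subset_closure (Set.mem_union_left _ rfl)
  have hHA : H ≤ A := (closure_le _).2 (Set.union_subset (by simpa using hxA) hle)
  obtain ⟨k, hk⟩ := card_dvd_of_le hBH
  have h2 : Nat.card H ∣ Nat.card A := card_dvd_of_le hHA
  have hkp : k ∣ p := by
    rw [hcard, hk, mul_comm p _] at h2
    exact (Nat.mul_dvd_mul_iff_left Nat.card_pos).1 h2
  rcases hp.eq_one_or_self_of_dvd k hkp with h | h
  · exfalso
    have hHB : H = B := (auxMC_eq_of_le_of_card_le hBH (by rw [hk, h, mul_one])).symm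
    exact hxB (hHB ▸ hxH)
  · exact auxMC_eq_of_le_of_card_le hHA (le_of_eq (by rw [hcard, hk, h, mul_comm]))

end AuxMC

/-- The series `P_0 = G`, `P_1` the 2-step centralizer, `P_i = γ_i(G)` for `i ≥ 2`
(note `γ_i(G) = (⊤ : Subgroup G).lowerCentralSeries (i-1)` in Mathlib's indexing). -/
def maximalClassP (G : Type*) [Group G] (P1 : Subgroup G) : ℕ → Subgroup G :=
  fun i => if i = 0 then ⊤ else if i = 1 then P1 else (⊤ : Subgroup G).lowerCentralSeries (i - 1)

theorem stmt_9 (p m : ℕ) [Fact p.Prime] (G : Type*) [Group G] [Finite G]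
    [Group.IsNilpotent G]
    (hG : Nat.card G = p ^ m) (hm : 4 ≤ m)
    (hclass : Group.nilpotencyClass G = m - 1)
    (P1 : Subgroup G)
    (hP1 : ∀ g : G, g ∈ P1 ↔
      ∀ x ∈ (⊤ : Subgroup G).lowerCentralSeries 1, x⁻¹ * g⁻¹ * x * g ∈ (⊤ : Subgroup G).lowerCentralSeries 3)
    (hpos : ∀ i j : ℕ, 1 ≤ i → 1 ≤ j →
      ⁅maximalClassP G P1 i, maximalClassP G P1 j⁆ ≤ maximalClassP G P1 (i + j + 1))
    (s : G) (hs : s ∉ P1) :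
    Subgroup.centralizer {s} = Subgroup.closure {s} ⊔ Subgroup.center G ∧
      Nat.card (Subgroup.centralizer {s}) = p ^ 2 := by
  classical
  have hp : p.Prime := Fact.out
  have hp1 : 1 < p := hp.one_lt
  have hstep : ∀ k : ℕ, (⊤ : Subgroup G).lowerCentralSeries (k + 1) = ⁅(⊤ : Subgroup G).lowerCentralSeries k, ⊤⁆ :=
    fun k => rfl
  have hbot : (⊤ : Subgroup G).lowerCentralSeries (m - 1) = ⊥ := by
    rw [← hclass]; exact Subgroup.lowerCentralSeries_nilpotencyClass
  have hne : ∀ k, k < m - 1 → (⊤ : Subgroup G).lowerCentralSeries (k + 1) ≠ (⊤ : Subgroup G).lowerCentralSeries k := by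
    intro k hk heq
    have hall : ∀ j, (⊤ : Subgroup G).lowerCentralSeries (k + j) = (⊤ : Subgroup G).lowerCentralSeries k := by
      intro j
      induction j with
      | zero => rfl
      | succ n ih =>
        have h1 : (⊤ : Subgroup G).lowerCentralSeries (k + n + 1) = ⁅(⊤ : Subgroup G).lowerCentralSeries (k + n), ⊤⁆ := rfl
        rw [show k + (n + 1) = k + n + 1 from rfl, h1, ih, ← hstep, heq]
    have hbk : (⊤ : Subgroup G).lowerCentralSeries k = ⊥ := by
      rw [← hall (m - 1 - k), show k + (m - 1 - k) = m - 1 by omega, hbot]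
    have hle := Subgroup.lowerCentralSeries_eq_bot_iff_nilpotencyClass_le.mp hbk
    rw [hclass] at hle
    omega
  have hlt : ∀ k, k < m - 1 → (⊤ : Subgroup G).lowerCentralSeries (k + 1) < (⊤ : Subgroup G).lowerCentralSeries k :=
    fun k hk => lt_of_le_of_ne (Subgroup.lowerCentralSeries_antitone _ (Nat.le_succ k)) (hne k hk)
  -- cardinalities
  have hdvdG : ∀ k, Nat.card ((⊤ : Subgroup G).lowerCentralSeries k) ∣ p ^ m :=
    fun k => hG ▸ card_subgroup_dvd_card _
  choose e hE using fun k => (Nat.dvd_prime_pow hp).1 (hdvdG k)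
  have hEc : ∀ k, Nat.card ((⊤ : Subgroup G).lowerCentralSeries k) = p ^ e k := fun k => (hE k).2
  have he0 : e 0 = m := by
    have h1 : (p : ℕ) ^ e 0 = p ^ m := by
      rw [← hEc 0, Subgroup.lowerCentralSeries_zero, card_top, hG]
    exact Nat.pow_right_injective hp.two_le h1
  have heLast : e (m - 1) = 0 := by
    have h1 : (p : ℕ) ^ e (m - 1) = p ^ 0 := by
      rw [← hEc (m - 1), hbot, card_bot, pow_zero]
    exact Nat.pow_right_injective hp.two_le h1
  have hdec : ∀ k, k < m - 1 → e (k + 1) < e k := by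
    intro k hk
    have h1 := auxMC_card_lt (hlt k hk)
    rw [hEc, hEc] at h1
    exact (Nat.pow_lt_pow_iff_right hp1).1 h1
  have hup : ∀ d k, k + d ≤ m - 1 → e (k + d) + d ≤ e k := by
    intro d
    induction d with
    | zero => intro k _; simp
    | succ n ih =>
      intro k hk
      have h1 : e (k + n + 1) < e (k + n) := hdec (k + n) (by omega)
      have h2 : e (k + n) + n ≤ e k := ih k (by omega)
      have h3 : k + (n + 1) = k + n + 1 := rfl
      rw [h3]
      omega
  have hlow : ∀ k, k ≤ m - 1 → m - 1 - k ≤ e k := by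
    intro k hk
    have h1 := hup (m - 1 - k) k (by omega)
    rw [show k + (m - 1 - k) = m - 1 by omega, heLast] at h1
    omega
  have he1le : e 1 ≤ m - 2 := by
    by_contra hcon
    have hu1 := hup 1 0 (by omega)
    rw [show (0 : ℕ) + 1 = 1 from rfl, he0] at hu1
    have he1 : e 1 = m - 1 := by omega
    have hcards : Nat.card G = p * Nat.card ((⊤ : Subgroup G).lowerCentralSeries 1) := by
      rw [hG, hEc 1, he1, ← pow_succ']
      congr 1
      omega
    obtain ⟨x, -, hx⟩ := SetLike.exists_of_lt (hlt 0 (by omega))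
    have hgen : Subgroup.closure ({x} ∪ ((⊤ : Subgroup G).lowerCentralSeries 1 : Set G)) = ⊤ :=
      auxMC_gen_step hp le_top (by rw [card_top, hcards]) (mem_top x) hx
    have hpair : ∀ a ∈ ({x} ∪ ((⊤ : Subgroup G).lowerCentralSeries 1 : Set G)),
        ∀ b ∈ ({x} ∪ ((⊤ : Subgroup G).lowerCentralSeries 1 : Set G)),
        ⁅a, b⁆ ∈ (⊤ : Subgroup G).lowerCentralSeries 2 := by
      rintro a (rfl | ha) b (rfl | hb)
      · simp only [commutatorElement_self]; exact one_mem _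
      · rw [← commutatorElement_inv b a]
        exact ((⊤ : Subgroup G).lowerCentralSeries 2).inv_mem
          (by rw [hstep 1]; exact commutator_mem_commutator hb (mem_top a))
      · rw [hstep 1]; exact commutator_mem_commutator ha (mem_top b)
      · rw [hstep 1]; exact commutator_mem_commutator ha (mem_top b)
    have hcc := auxMC_closure_comm _ hpair
    rw [hgen] at hcc
    have hle12 : (⊤ : Subgroup G).lowerCentralSeries 1 ≤ (⊤ : Subgroup G).lowerCentralSeries 2 := by
      have h4 : (⊤ : Subgroup G).lowerCentralSeries 1 = ⁅(⊤ : Subgroup G), ⊤⁆ := by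
        rw [hstep 0, Subgroup.lowerCentralSeries_zero]
      rw [h4]
      exact commutator_le.2 fun g1 _ g2 _ => hcc g1 (mem_top _) g2 (mem_top _)
    exact absurd hle12 ((hlt 1 (by omega)).not_ge)
  have he1 : e 1 = m - 2 := by
    have h1 := hlow 1 (by omega)
    omega
  have hcard : ∀ k, 1 ≤ k → k ≤ m - 1 →
      Nat.card ((⊤ : Subgroup G).lowerCentralSeries k) = p ^ (m - 1 - k) := by
    intro k h1 h2
    have hu := hup (k - 1) 1 (by omega)
    rw [show 1 + (k - 1) = k by omega, he1] at hu
    have hl := hlow k (by omega)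
    rw [hEc]
    congr 1
    omega
  have hcard1 : Nat.card ((⊤ : Subgroup G).lowerCentralSeries 1) = p ^ (m - 2) := by
    rw [hcard 1 le_rfl (by omega)]; congr 1
  have hcard2 : Nat.card ((⊤ : Subgroup G).lowerCentralSeries 2) = p ^ (m - 3) := by
    rw [hcard 2 (by omega) (by omega)]; congr 1
  have hcard3 : Nat.card ((⊤ : Subgroup G).lowerCentralSeries 3) = p ^ (m - 4) := by
    rw [hcard 3 (by omega) (by omega)]; congr 1
  obtain ⟨t, ht1, ht2⟩ := SetLike.exists_of_lt (hlt 1 (by omega))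
  have hgen2 : Subgroup.closure ({t} ∪ ((⊤ : Subgroup G).lowerCentralSeries 2 : Set G)) =
      (⊤ : Subgroup G).lowerCentralSeries 1 :=
    auxMC_gen_step hp (Subgroup.lowerCentralSeries_antitone _ (by omega))
      (by rw [hcard1, hcard2, ← pow_succ']; congr 1; omega) ht1 ht2
  -- membership in P1 via the fixed generator t
  have hmemP1 : ∀ g : G, g ∈ P1 ↔ ⁅t, g⁆ ∈ (⊤ : Subgroup G).lowerCentralSeries 3 := by
    intro g
    constructor
    · intro hg
      exact (auxMC_mem_iff _ t g).2 ((hP1 g).1 hg t ht1)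
    · intro hg
      rw [hP1]
      intro x hx
      rw [← auxMC_mem_iff]
      have hpair : ∀ a ∈ ({t} ∪ ((⊤ : Subgroup G).lowerCentralSeries 2 : Set G)), ∀ b ∈ ({g} : Set G),
          ⁅a, b⁆ ∈ (⊤ : Subgroup G).lowerCentralSeries 3 := by
        rintro a (rfl | ha) b rfl
        · exact hg
        · rw [hstep 2]; exact commutator_mem_commutator ha (mem_top b)
      exact auxMC_closure_comm _ hpair x (by rw [hgen2]; exact hx) g (subset_closure rfl)
  -- the homomorphism g ↦ [t,g] mod γ₄
  set F : G →* G ⧸ (⊤ : Subgroup G).lowerCentralSeries 3 :=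
    { toFun := fun g => ((⁅t, g⁆ : G) : G ⧸ (⊤ : Subgroup G).lowerCentralSeries 3)
      map_one' := by
        show ((⁅t, (1 : G)⁆ : G) : G ⧸ (⊤ : Subgroup G).lowerCentralSeries 3) = 1
        have h1 : ⁅t, (1 : G)⁆ = 1 := by simp [commutatorElement_def]
        rw [h1]; rfl
      map_mul' := by
        intro g h
        show ((⁅t, g * h⁆ : G) : G ⧸ (⊤ : Subgroup G).lowerCentralSeries 3) =
          ((⁅t, g⁆ : G) : G ⧸ (⊤ : Subgroup G).lowerCentralSeries 3) * ((⁅t, h⁆ : G) : G ⧸ (⊤ : Subgroup G).lowerCentralSeries 3)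
        rw [← QuotientGroup.mk_mul, QuotientGroup.eq]
        have key : ⁅t, g * h⁆⁻¹ * (⁅t, g⁆ * ⁅t, h⁆) = ⁅g, ⁅t, h⁆⁻¹⁆ := by
          simp only [commutatorElement_def]; group
        rw [key, ← commutatorElement_inv]
        refine ((⊤ : Subgroup G).lowerCentralSeries 3).inv_mem ?_
        rw [hstep 2]
        refine commutator_mem_commutator (((⊤ : Subgroup G).lowerCentralSeries 2).inv_mem ?_) (mem_top g)
        rw [hstep 1]; exact commutator_mem_commutator ht1 (mem_top h) } with hFdef
  have hkerF : F.ker = P1 := by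
    ext g
    rw [MonoidHom.mem_ker]
    show ((⁅t, g⁆ : G) : G ⧸ (⊤ : Subgroup G).lowerCentralSeries 3) = 1 ↔ _
    rw [QuotientGroup.eq_one_iff]
    exact (hmemP1 g).symm
  haveI hP1n : P1.Normal := hkerF ▸ MonoidHom.normal_ker F
  have hindex : P1.index = p := by
    have h1 : P1.index = Nat.card F.range := by rw [← hkerF]; exact Subgroup.index_ker F
    set f0 := (QuotientGroup.mk' ((⊤ : Subgroup G).lowerCentralSeries 3)).domRestrict ((⊤ : Subgroup G).lowerCentralSeries 2)
      with hf0
    have hker0 : f0.ker = ((⊤ : Subgroup G).lowerCentralSeries 3).subgroupOf ((⊤ : Subgroup G).lowerCentralSeries 2) := by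
      rw [hf0, MonoidHom.ker_domRestrict, QuotientGroup.ker_mk']
    have hcker : Nat.card f0.ker = p ^ (m - 4) := by
      rw [hker0]
      exact (Nat.card_congr
        (subgroupOfEquivOfLe (Subgroup.lowerCentralSeries_antitone _ (by omega))).toEquiv).trans hcard3
    have hq : Nat.card ((⊤ : Subgroup G).lowerCentralSeries 2) = Nat.card f0.range * Nat.card f0.ker := by
      rw [Subgroup.card_eq_card_quotient_mul_card_subgroup f0.ker]
      congr 1
      exact Nat.card_congr (QuotientGroup.quotientKerEquivRange f0).toEquiv
    have hrange0 : Nat.card f0.range = p := by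
      rw [hcard2, hcker] at hq
      have hpow : (p : ℕ) ^ (m - 3) = p ^ (m - 4) * p := by rw [← pow_succ]; congr 1; omega
      rw [hpow, mul_comm (Nat.card f0.range)] at hq
      exact (Nat.eq_of_mul_eq_mul_left (pow_pos hp.pos (m - 4)) hq).symm
    have hrangeEq : f0.range =
        ((⊤ : Subgroup G).lowerCentralSeries 2).map (QuotientGroup.mk' ((⊤ : Subgroup G).lowerCentralSeries 3)) :=
      by rw [hf0, MonoidHom.domRestrict_range]
    have hle2 : F.range ≤ f0.range := by
      rw [hrangeEq]
      rintro q ⟨g, rfl⟩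
      exact ⟨⁅t, g⁆, by rw [hstep 1]; exact commutator_mem_commutator ht1 (mem_top g), rfl⟩
    have hdvd : Nat.card F.range ∣ p := hrange0 ▸ card_dvd_of_le hle2
    rcases hp.eq_one_or_self_of_dvd _ hdvd with h | h
    · exfalso
      rw [h] at h1
      exact hs ((Subgroup.index_eq_one.1 h1) ▸ mem_top s)
    · rw [h1, h]
  have hcardP1 : Nat.card P1 = p ^ (m - 1) := by
    have h1 := Subgroup.card_mul_index P1
    rw [hindex, hG] at h1
    have hpow : (p : ℕ) ^ m = p ^ (m - 1) * p := by rw [← pow_succ]; congr 1; omega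
    rw [hpow] at h1
    exact Nat.eq_of_mul_eq_mul_right hp.pos h1
  have hMC1 : maximalClassP G P1 1 = P1 := rfl
  have hMC' : ∀ k, 1 ≤ k → maximalClassP G P1 (k + 1) = (⊤ : Subgroup G).lowerCentralSeries k := by
    intro k hk
    show (if k + 1 = 0 then ⊤ else if k + 1 = 1 then P1
      else (⊤ : Subgroup G).lowerCentralSeries (k + 1 - 1)) = (⊤ : Subgroup G).lowerCentralSeries k
    rw [if_neg (by omega), if_neg (by omega), Nat.add_sub_cancel]
  have hP2le : (⊤ : Subgroup G).lowerCentralSeries 1 ≤ P1 := by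
    intro g hg
    rw [hP1]
    intro x hx
    rw [← auxMC_mem_iff]
    have h22 := hpos 2 2 (by omega) (by omega)
    rw [show (2 : ℕ) + 2 + 1 = 4 + 1 from rfl, hMC' 4 (by omega),
      show (2 : ℕ) = 1 + 1 from rfl, hMC' 1 le_rfl] at h22
    exact Subgroup.lowerCentralSeries_antitone _ (by omega) (h22 (commutator_mem_commutator hx hg))
  have htopgen : Subgroup.closure ({s} ∪ (P1 : Set G)) = ⊤ :=
    auxMC_gen_step hp le_top
      (by rw [card_top, hG, hcardP1, ← pow_succ']; congr 1; omega) (mem_top s) hs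
  -- center facts
  have hZ1 : (⊤ : Subgroup G).lowerCentralSeries (m - 2) ≤ Subgroup.center G := by
    intro x hx
    rw [Subgroup.mem_center_iff]
    intro g
    have h1 : ⁅x, g⁆ ∈ (⊤ : Subgroup G).lowerCentralSeries (m - 2 + 1) := by
      rw [hstep (m - 2)]; exact commutator_mem_commutator hx (mem_top g)
    rw [show m - 2 + 1 = m - 1 by omega, hbot] at h1
    have hxg : ⁅x, g⁆ = 1 := by simpa using h1
    exact (commutatorElement_eq_one_iff_commute.1 hxg).symm.eq
  have hZP1 : Subgroup.center G ≤ P1 := by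
    intro z hz
    rw [hP1]
    intro x hx
    have hxz : Commute x z := Subgroup.mem_center_iff.1 hz x
    have h2 : z⁻¹ * x = x * z⁻¹ := (hxz.symm.inv_left).eq
    have h3 : x⁻¹ * z⁻¹ * x * z = 1 := by
      rw [mul_assoc x⁻¹ z⁻¹ x, h2]
      group
    rw [h3]
    exact one_mem _
  -- the key injectivity steps
  have hstepA : ∀ x, x ∈ P1 → ⁅x, s⁆ ∈ (⊤ : Subgroup G).lowerCentralSeries 2 →
      x ∈ (⊤ : Subgroup G).lowerCentralSeries 1 := by
    intro x hxP hxs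
    by_contra hxB
    have hgenA : Subgroup.closure ({x} ∪ ((⊤ : Subgroup G).lowerCentralSeries 1 : Set G)) = P1 :=
      auxMC_gen_step hp hP2le (by rw [hcardP1, hcard1, ← pow_succ']; congr 1; omega) hxP hxB
    have h11 := hpos 1 1 le_rfl le_rfl
    rw [show (1 : ℕ) + 1 + 1 = 2 + 1 from rfl, hMC' 2 (by omega), hMC1] at h11
    have hpairA : ∀ a ∈ ({x} ∪ ((⊤ : Subgroup G).lowerCentralSeries 1 : Set G)),
        ∀ b ∈ ({s} ∪ (P1 : Set G)), ⁅a, b⁆ ∈ (⊤ : Subgroup G).lowerCentralSeries 2 := by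
      rintro a (rfl | ha) b (rfl | hb)
      · exact hxs
      · exact h11 (commutator_mem_commutator hxP hb)
      · rw [hstep 1]; exact commutator_mem_commutator ha (mem_top b)
      · have h21 := hpos 2 1 (by omega) le_rfl
        rw [show (2 : ℕ) + 1 + 1 = 3 + 1 from rfl, hMC' 3 (by omega),
          show (2 : ℕ) = 1 + 1 from rfl, hMC' 1 le_rfl, hMC1] at h21
        exact Subgroup.lowerCentralSeries_antitone _ (by omega)
          (h21 (commutator_mem_commutator ha hb))
    have hcc := auxMC_closure_comm _ hpairA
    rw [hgenA, htopgen] at hcc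
    have hpairT : ∀ a ∈ ({s} ∪ (P1 : Set G)), ∀ b ∈ ({s} ∪ (P1 : Set G)),
        ⁅a, b⁆ ∈ (⊤ : Subgroup G).lowerCentralSeries 2 := by
      rintro a (rfl | ha) b (rfl | hb)
      · simp only [commutatorElement_self]; exact one_mem _
      · rw [← commutatorElement_inv b a]
        exact ((⊤ : Subgroup G).lowerCentralSeries 2).inv_mem (hcc b hb a (mem_top _))
      · exact hcc a ha b (mem_top _)
      · exact h11 (commutator_mem_commutator ha hb)
    have hccT := auxMC_closure_comm _ hpairT
    rw [htopgen] at hccT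
    have hle12 : (⊤ : Subgroup G).lowerCentralSeries 1 ≤ (⊤ : Subgroup G).lowerCentralSeries 2 := by
      have h4 : (⊤ : Subgroup G).lowerCentralSeries 1 = ⁅(⊤ : Subgroup G), ⊤⁆ := by
        rw [hstep 0, Subgroup.lowerCentralSeries_zero]
      rw [h4]
      exact commutator_le.2 fun g1 _ g2 _ => hccT g1 (mem_top _) g2 (mem_top _)
    exact absurd hle12 ((hlt 1 (by omega)).not_ge)
  have hstepB : ∀ j, 1 ≤ j → j ≤ m - 3 → ∀ x, x ∈ (⊤ : Subgroup G).lowerCentralSeries j →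
      ⁅x, s⁆ ∈ (⊤ : Subgroup G).lowerCentralSeries (j + 2) → x ∈ (⊤ : Subgroup G).lowerCentralSeries (j + 1) := by
    intro j hj1 hj3 x hxA hxs
    by_contra hxB
    have hcj : Nat.card ((⊤ : Subgroup G).lowerCentralSeries j) = p ^ (m - 1 - j) :=
      hcard j hj1 (by omega)
    have hcj1 : Nat.card ((⊤ : Subgroup G).lowerCentralSeries (j + 1)) = p ^ (m - 2 - j) := by
      rw [hcard (j + 1) (by omega) (by omega)]; congr 1; omega
    have hgenB : Subgroup.closure ({x} ∪ ((⊤ : Subgroup G).lowerCentralSeries (j + 1) : Set G)) =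
        (⊤ : Subgroup G).lowerCentralSeries j :=
      auxMC_gen_step hp (Subgroup.lowerCentralSeries_antitone _ (by omega))
        (by rw [hcj, hcj1, ← pow_succ']; congr 1; omega) hxA hxB
    have hxA' : x ∈ maximalClassP G P1 (j + 1) := by
      rw [hMC' j hj1]; exact hxA
    have hpairB : ∀ a ∈ ({x} ∪ ((⊤ : Subgroup G).lowerCentralSeries (j + 1) : Set G)),
        ∀ b ∈ ({s} ∪ (P1 : Set G)), ⁅a, b⁆ ∈ (⊤ : Subgroup G).lowerCentralSeries (j + 2) := by
      rintro a (rfl | ha) b (rfl | hb)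
      · exact hxs
      · have h1 := hpos (j + 1) 1 (by omega) le_rfl
        have h2 := h1 (commutator_mem_commutator hxA' (show b ∈ maximalClassP G P1 1 from hb))
        rwa [show j + 1 + 1 + 1 = (j + 2) + 1 from rfl, hMC' (j + 2) (by omega)] at h2
      · rw [show j + 2 = (j + 1) + 1 from rfl, hstep (j + 1)]
        exact commutator_mem_commutator ha (mem_top b)
      · have h1 := hpos (j + 2) 1 (by omega) le_rfl
        have ha' : a ∈ maximalClassP G P1 (j + 2) := by
          rw [show j + 2 = (j + 1) + 1 from rfl, hMC' (j + 1) (by omega)]; exact ha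
        have h2 := h1 (commutator_mem_commutator ha' (show b ∈ maximalClassP G P1 1 from hb))
        rw [show j + 2 + 1 + 1 = (j + 3) + 1 from rfl, hMC' (j + 3) (by omega)] at h2
        exact Subgroup.lowerCentralSeries_antitone _ (by omega) h2
    have hcc := auxMC_closure_comm _ hpairB
    rw [hgenB, htopgen] at hcc
    have hle' : (⊤ : Subgroup G).lowerCentralSeries (j + 1) ≤ (⊤ : Subgroup G).lowerCentralSeries (j + 2) := by
      rw [hstep j]
      exact commutator_le.2 fun g1 h1 g2 _ => hcc g1 h1 g2 (mem_top _)
    exact absurd hle' ((hlt (j + 1) (by omega)).not_ge)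
  -- descent
  have hdescent : ∀ x, x ∈ Subgroup.centralizer {s} → x ∈ P1 →
      x ∈ (⊤ : Subgroup G).lowerCentralSeries (m - 2) := by
    intro x hxc hxp
    have hxs : ⁅x, s⁆ = 1 := by
      have h1 := Subgroup.mem_centralizer_iff.1 hxc s rfl
      exact commutatorElement_eq_one_iff_commute.2 h1.symm
    have h1 : x ∈ (⊤ : Subgroup G).lowerCentralSeries 1 := hstepA x hxp (by rw [hxs]; exact one_mem _)
    have key : ∀ d, d ≤ m - 3 → x ∈ (⊤ : Subgroup G).lowerCentralSeries (1 + d) := by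
      intro d
      induction d with
      | zero => intro _; exact h1
      | succ n ih =>
        intro hn
        have hx' := ih (by omega)
        have h2 := hstepB (1 + n) (by omega) (by omega) x hx'
          (by rw [hxs]; exact one_mem _)
        rwa [show 1 + n + 1 = 1 + (n + 1) from rfl] at h2
    have h3 := key (m - 3) le_rfl
    rwa [show 1 + (m - 3) = m - 2 by omega] at h3
  have hZeq : Subgroup.center G = (⊤ : Subgroup G).lowerCentralSeries (m - 2) := by
    apply le_antisymm _ hZ1
    intro z hz
    exact hdescent z (Subgroup.center_le_centralizer {s} hz) (hZP1 hz)
  have hcardZ : Nat.card (Subgroup.center G) = p := by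
    rw [hZeq, hcard (m - 2) (by omega) (by omega), show m - 1 - (m - 2) = 1 by omega, pow_one]
  set H := Subgroup.centralizer {s} with hHdef
  have hsH : s ∈ H := by
    rw [hHdef]
    exact Subgroup.mem_centralizer_iff.2 (by
      intro y hy
      rw [Set.mem_singleton_iff] at hy
      rw [hy])
  have hinter : H ⊓ P1 = Subgroup.center G := by
    apply le_antisymm
    · intro x hx
      rw [hZeq]
      exact hdescent x hx.1 hx.2
    · exact le_inf (Subgroup.center_le_centralizer {s}) hZP1
  have hrel : P1.relIndex H = p := by
    have hdvd : P1.relIndex H ∣ p := hindex ▸ Subgroup.relIndex_dvd_index_of_normal P1 H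
    rcases hp.eq_one_or_self_of_dvd _ hdvd with h | h
    · exact absurd (Subgroup.relIndex_eq_one.1 h hsH) hs
    · exact h
  have hcardsub : Nat.card (P1.subgroupOf H) = p := by
    rw [← Subgroup.inf_subgroupOf_right P1 H]
    have h1 : Nat.card ((P1 ⊓ H).subgroupOf H) = Nat.card (P1 ⊓ H : Subgroup G) :=
      Nat.card_congr (subgroupOfEquivOfLe inf_le_right).toEquiv
    rw [h1, inf_comm P1 H, hinter, hcardZ]
  have hcardH : Nat.card H = p ^ 2 := by
    have h1 := Subgroup.card_mul_index (P1.subgroupOf H)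
    rw [hcardsub] at h1
    have hidx : (P1.subgroupOf H).index = P1.relIndex H := rfl
    rw [hidx, hrel] at h1
    rw [pow_two]
    exact h1.symm
  have hsnotZ : s ∉ Subgroup.center G := fun h => hs (hZP1 h)
  set L := Subgroup.closure {s} ⊔ Subgroup.center G with hLdef
  have hLH : L ≤ H := by
    rw [hLdef, hHdef]
    refine sup_le ((closure_le _).2 ?_) (Subgroup.center_le_centralizer {s})
    intro y hy
    rw [Set.mem_singleton_iff] at hy
    subst hy
    exact hsH
  have hZL : Subgroup.center G ≤ L := le_sup_right
  have hsL : s ∈ L := by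
    rw [hLdef]
    exact Subgroup.mem_sup_left (subset_closure rfl)
  obtain ⟨k, hk⟩ := card_dvd_of_le hZL
  rw [hcardZ] at hk
  have hkp : k ∣ p := by
    have h2 : Nat.card L ∣ p ^ 2 := hcardH ▸ card_dvd_of_le hLH
    rw [hk, pow_two] at h2
    exact (Nat.mul_dvd_mul_iff_left hp.pos).1 h2
  rcases hp.eq_one_or_self_of_dvd _ hkp with h | h
  · exfalso
    have hZeqL : Subgroup.center G = L :=
      auxMC_eq_of_le_of_card_le hZL (by rw [hk, h, mul_one, hcardZ])
    exact hsnotZ (hZeqL ▸ hsL)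
  · have hcardL : Nat.card L = p ^ 2 := by rw [hk, h, pow_two]
    have hfin : L = H := auxMC_eq_of_le_of_card_le hLH (by rw [hcardL, hcardH])
    exact ⟨hfin.symm, hcardH⟩
end

section
/- Let G be a p-group of maximal class of order p^m with positive degree of commutativity possessing an abelian maximal subgroup P_1. Then the number of conjugacy classes of G equals p^{m−2} + p² − 1. -/
lemma lcs_strict_aux {G : Type*} [Group G] [Group.IsNilpotent G] {k : ℕ}
    (hk : k < Group.nilpotencyClass G) :
    (⊤ : Subgroup G).lowerCentralSeries (k + 1) < (⊤ : Subgroup G).lowerCentralSeries k := by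
  refine lt_of_le_of_ne (Subgroup.lowerCentralSeries_antitone ⊤ (Nat.le_succ k)) ?_
  intro heq
  have hconst : ∀ j : ℕ, (⊤ : Subgroup G).lowerCentralSeries (k + j) = (⊤ : Subgroup G).lowerCentralSeries k := by
    intro j
    induction j with
    | zero => rfl
    | succ j ih =>
      calc (⊤ : Subgroup G).lowerCentralSeries (k + (j + 1))
          = ⁅(⊤ : Subgroup G).lowerCentralSeries (k + j), ⊤⁆ := Subgroup.lowerCentralSeries_succ _ _
        _ = ⁅(⊤ : Subgroup G).lowerCentralSeries k, ⊤⁆ := by rw [ih]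
        _ = (⊤ : Subgroup G).lowerCentralSeries (k + 1) := (Subgroup.lowerCentralSeries_succ _ _).symm
        _ = (⊤ : Subgroup G).lowerCentralSeries k := heq
  have hbot : (⊤ : Subgroup G).lowerCentralSeries k = ⊥ := by
    have h := hconst (Group.nilpotencyClass G - k)
    rw [Nat.add_sub_cancel' hk.le] at h
    rw [← h, Subgroup.lowerCentralSeries_nilpotencyClass]
  exact absurd (Subgroup.lowerCentralSeries_eq_bot_iff_nilpotencyClass_le.mp hbot) (not_le.mpr hk)

lemma lcs_card_lb (p : ℕ) (hp : p.Prime) {G : Type*} [Group G] [Finite G]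
    [Group.IsNilpotent G] (hpg : IsPGroup p G) :
    ∀ d k : ℕ, k + d ≤ Group.nilpotencyClass G →
      p ^ d ∣ Nat.card ((⊤ : Subgroup G).lowerCentralSeries k) := by
  haveI : Fact p.Prime := ⟨hp⟩
  intro d
  induction d with
  | zero => intro k _; simp
  | succ d ih =>
    intro k hk
    have h1 := ih (k + 1) (by omega)
    have hlt : (⊤ : Subgroup G).lowerCentralSeries (k + 1) < (⊤ : Subgroup G).lowerCentralSeries k :=
      lcs_strict_aux (by omega)
    obtain ⟨a, ha⟩ := IsPGroup.iff_card.mp (hpg.to_subgroup ((⊤ : Subgroup G).lowerCentralSeries (k + 1)))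
    obtain ⟨b, hb⟩ := IsPGroup.iff_card.mp (hpg.to_subgroup ((⊤ : Subgroup G).lowerCentralSeries k))
    have hdvd : Nat.card ((⊤ : Subgroup G).lowerCentralSeries (k + 1)) ∣ Nat.card ((⊤ : Subgroup G).lowerCentralSeries k) :=
      Subgroup.card_dvd_of_le hlt.le
    have hne : Nat.card ((⊤ : Subgroup G).lowerCentralSeries (k + 1)) ≠ Nat.card ((⊤ : Subgroup G).lowerCentralSeries k) := by
      intro h
      exact hlt.ne (Subgroup.eq_of_le_of_card_ge hlt.le h.ge)
    rw [ha] at h1; rw [hb] at hdvd hne ⊢; rw [ha] at hdvd hne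
    have hab : a ≤ b := (Nat.pow_dvd_pow_iff_le_right hp.one_lt).mp hdvd
    have hda : d ≤ a := (Nat.pow_dvd_pow_iff_le_right hp.one_lt).mp h1
    have : a < b := lt_of_le_of_ne hab (fun h => hne (by rw [h]))
    exact pow_dvd_pow p (by omega)

open scoped commutatorElement

theorem stmt_12 (p m : ℕ) [Fact p.Prime] (G : Type*) [Group G] [Finite G]
    [Group.IsNilpotent G]
    (hG : Nat.card G = p ^ m) (hm : 4 ≤ m)
    (hclass : Group.nilpotencyClass G = m - 1)
    (P1 : Subgroup G)
    (hP1 : ∀ g : G, g ∈ P1 ↔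
      ∀ x ∈ (⊤ : Subgroup G).lowerCentralSeries 1, x⁻¹ * g⁻¹ * x * g ∈ (⊤ : Subgroup G).lowerCentralSeries 3)
    (hpos : ∀ i j : ℕ, 1 ≤ i → 1 ≤ j →
      ⁅maximalClassP G P1 i, maximalClassP G P1 j⁆ ≤ maximalClassP G P1 (i + j + 1))
    (hP1idx : P1.index = p) (hP1ab : IsMulCommutative P1) :
    Nat.card (ConjClasses G) = p ^ (m - 2) + p ^ 2 - 1 := by
  classical
  haveI := hP1ab
  have hp : p.Prime := Fact.out
  have hp1 : 1 < p := hp.one_lt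
  have hpg : IsPGroup p G := IsPGroup.of_card hG
  have hmG : 1 < Nat.card G := by
    rw [hG]; calc 1 < p := hp1
      _ ≤ p ^ m := Nat.le_self_pow (by omega) p
  haveI : Nontrivial G := Finite.one_lt_card_iff_nontrivial.mp hmG
  haveI hP1n : P1.Normal := by
    constructor
    intro g hg h
    rw [hP1] at hg ⊢
    intro x hx
    have hy : h⁻¹ * x * h ∈ (⊤ : Subgroup G).lowerCentralSeries 1 := by
      have := (Subgroup.lowerCentralSeries_normal ⊤ 1).conj_mem x hx h⁻¹
      rwa [inv_inv] at this
    have h2 := hg (h⁻¹ * x * h) hy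
    have h3 := (Subgroup.lowerCentralSeries_normal ⊤ 3).conj_mem _ h2 h
    convert h3 using 1
    group
  have hAcard : Nat.card P1 = p ^ (m - 1) := by
    have h1 := Subgroup.card_mul_index P1
    rw [hP1idx, hG] at h1
    have hm1 : p ^ m = p ^ (m - 1) * p := by rw [← pow_succ]; congr 1; omega
    rw [hm1] at h1
    exact Nat.eq_of_mul_eq_mul_right hp.pos h1
  have hZA : Subgroup.center G ≤ P1 := by
    intro g hg
    rw [hP1]
    intro x hx
    have hc : g⁻¹ * x = x * g⁻¹ := by
      have h1 := Subgroup.mem_center_iff.mp hg x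
      have : x * g = g * x := h1
      calc g⁻¹ * x = g⁻¹ * x * g * g⁻¹ := by group
        _ = g⁻¹ * (x * g) * g⁻¹ := by group
        _ = g⁻¹ * (g * x) * g⁻¹ := by rw [this]
        _ = x * g⁻¹ := by group
    have : x⁻¹ * g⁻¹ * x * g = 1 := by
      rw [mul_assoc x⁻¹ g⁻¹ x, hc]; group
    rw [this]; exact Subgroup.one_mem _
  have hZgt : 1 < Nat.card (Subgroup.center G) := by
    haveI := hpg.center_nontrivial
    exact Finite.one_lt_card_iff_nontrivial.mpr this
  have hpZ : p ∣ Nat.card (Subgroup.center G) := by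
    obtain ⟨k, hk⟩ := IsPGroup.iff_card.mp (hpg.to_subgroup (Subgroup.center G))
    rcases k with _ | k
    · rw [hk] at hZgt; simp at hZgt
    · rw [hk]; exact dvd_pow_self p (Nat.succ_ne_zero k)
  have hcomm : ∀ a b : G, a ∈ P1 → b ∈ P1 → a * b = b * a := fun a b ha hb =>
    Subgroup.mul_comm_of_mem_isMulCommutative (H := P1) ha hb

  have key : ∀ s : G, s ∉ P1 →
      Nat.card (Subgroup.centralizer ({s} : Set G)) = p ^ 2 ∧
      Nat.card (Subgroup.center G) = p := by
    intro s hs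
    have hconjA : ∀ a : G, a ∈ P1 → ∀ h : G, h * a * h⁻¹ ∈ P1 := fun a ha h =>
      hP1n.conj_mem a ha h
    have hsup : P1 ⊔ Subgroup.closure {s} = ⊤ := by
      by_contra hne
      have hle : P1 ≤ P1 ⊔ Subgroup.closure {s} := le_sup_left
      have hdvd : (P1 ⊔ Subgroup.closure {s}).index ∣ p :=
        hP1idx ▸ Subgroup.index_dvd_of_le hle
      rcases hp.eq_one_or_self_of_dvd _ hdvd with h1 | hpp
      · exact hne (Subgroup.index_eq_one.mp h1)
      · have hrel := Subgroup.relIndex_mul_index hle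
        rw [hpp, hP1idx] at hrel
        have hone : P1.relIndex (P1 ⊔ Subgroup.closure {s}) = 1 :=
          Nat.eq_of_mul_eq_mul_right hp.pos (hrel.trans (one_mul p).symm)
        have hsub := Subgroup.relIndex_eq_one.mp hone
        exact hs (hsub (Subgroup.mem_sup_right (Subgroup.subset_closure (Set.mem_singleton s))))
    have hcentral : ∀ x : G, x ∈ P1 → x * s = s * x → x ∈ Subgroup.center G := by
      intro x hx hxs
      rw [Subgroup.mem_center_iff]
      intro g
      have hg : g ∈ P1 ⊔ Subgroup.closure {s} := hsup ▸ Subgroup.mem_top g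
      have hle : P1 ⊔ Subgroup.closure {s} ≤ Subgroup.centralizer {x} := by
        refine sup_le ?_ ?_
        · intro b hb
          rw [Subgroup.mem_centralizer_singleton_iff]
          exact hcomm b x hb hx
        · rw [Subgroup.closure_le]
          intro t ht
          rw [Set.mem_singleton_iff] at ht
          subst ht
          rw [SetLike.mem_coe, Subgroup.mem_centralizer_singleton_iff]
          exact hxs.symm
      exact Subgroup.mem_centralizer_singleton_iff.mp (hle hg)
    have hmemcomm : ∀ a : G, a ∈ P1 → ⁅a, s⁆ ∈ P1 := by
      intro a ha
      have h2 : s * a⁻¹ * s⁻¹ ∈ P1 := hconjA a⁻¹ (inv_mem ha) s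
      have h3 : ⁅a, s⁆ = a * (s * a⁻¹ * s⁻¹) := by
        rw [commutatorElement_def]; group
      rw [h3]; exact mul_mem ha h2
    let φ : P1 →* G :=
      { toFun := fun a => ⁅(a : G), s⁆
        map_one' := by simp
        map_mul' := by
          rintro ⟨a, ha⟩ ⟨b, hb⟩
          show ⁅a * b, s⁆ = ⁅a, s⁆ * ⁅b, s⁆
          have hu : ⁅b, s⁆ ∈ P1 := hmemcomm b hb
          have hv : s * a⁻¹ * s⁻¹ ∈ P1 := hconjA a⁻¹ (inv_mem ha) s
          calc ⁅a * b, s⁆ = a * (⁅b, s⁆ * (s * a⁻¹ * s⁻¹)) := by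
                rw [commutatorElement_def, commutatorElement_def]; group
            _ = a * ((s * a⁻¹ * s⁻¹) * ⁅b, s⁆) := by rw [hcomm _ _ hu hv]
            _ = ⁅a, s⁆ * ⁅b, s⁆ := by
                rw [commutatorElement_def, commutatorElement_def]; group }
    have hφ : ∀ a : P1, φ a = ⁅(a : G), s⁆ := fun a => rfl
    have hMA : φ.range ≤ P1 := by
      rintro x ⟨⟨a, ha⟩, rfl⟩
      exact hmemcomm a ha
    haveI hnorm : φ.range.Normal := by
      rw [← Subgroup.normalizer_eq_top_iff, eq_top_iff, ← hsup]
      refine sup_le ?_ ?_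
      · intro a ha
        rw [Subgroup.mem_normalizer_iff]
        intro h
        constructor
        · intro hh
          have hhA : h ∈ P1 := hMA hh
          have he : a * h * a⁻¹ = h := by rw [hcomm a h ha hhA]; group
          rw [he]; exact hh
        · intro hh
          have hhA : a * h * a⁻¹ ∈ P1 := hMA hh
          have hhA' : h ∈ P1 := by
            have h4 : h = a⁻¹ * (a * h * a⁻¹) * a⁻¹⁻¹ := by group
            rw [h4]; exact hconjA _ hhA a⁻¹
          have he : a * h * a⁻¹ = h := by rw [hcomm a h ha hhA']; group
          rwa [he] at hh
      · rw [Subgroup.closure_le]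
        intro t ht
        rw [Set.mem_singleton_iff] at ht
        rw [ht, SetLike.mem_coe, Subgroup.mem_normalizer_iff]
        intro h
        constructor
        · rintro ⟨⟨a, ha⟩, rfl⟩
          refine ⟨⟨s * a * s⁻¹, hconjA a ha s⟩, ?_⟩
          show ⁅s * a * s⁻¹, s⁆ = s * ⁅a, s⁆ * s⁻¹
          rw [commutatorElement_def, commutatorElement_def]; group
        · rintro ⟨⟨a, ha⟩, hEq⟩
          have ha' : s⁻¹ * a * s ∈ P1 := by
            have := hconjA a ha s⁻¹
            rwa [inv_inv] at this
          refine ⟨⟨s⁻¹ * a * s, ha'⟩, ?_⟩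
          show ⁅s⁻¹ * a * s, s⁆ = h
          have hEq' : ⁅(a : G), s⁆ = s * h * s⁻¹ := hEq
          have h5 : h = s⁻¹ * ⁅(a : G), s⁆ * s := by rw [hEq']; group
          rw [h5, commutatorElement_def, commutatorElement_def]; group
    have hdec : ∀ g : G, ∃ a : G, a ∈ P1 ∧ ∃ k : ℤ, g = a * s ^ k := by
      intro g
      have hπs : ((s : G) : G ⧸ P1) ≠ 1 := by
        rw [Ne, QuotientGroup.eq_one_iff]; exact hs
      have hord : orderOf ((s : G) : G ⧸ P1) = p := by
        have hdvd : orderOf ((s : G) : G ⧸ P1) ∣ p := by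
          have := orderOf_dvd_natCard ((s : G) : G ⧸ P1)
          rwa [← Subgroup.index_eq_card, hP1idx] at this
        rcases hp.eq_one_or_self_of_dvd _ hdvd with h | h
        · exact absurd (orderOf_eq_one_iff.mp h) hπs
        · exact h
      have htop : Subgroup.zpowers ((s : G) : G ⧸ P1) = ⊤ := by
        apply Subgroup.eq_top_of_card_eq
        rw [Nat.card_zpowers, hord, ← Subgroup.index_eq_card, hP1idx]
      have hmem : ((g : G) : G ⧸ P1) ∈ Subgroup.zpowers ((s : G) : G ⧸ P1) :=
        htop ▸ Subgroup.mem_top _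
      obtain ⟨k, hk⟩ := Subgroup.mem_zpowers_iff.mp hmem
      refine ⟨g * (s ^ k)⁻¹, ?_, k, by group⟩
      have h6 : ((g * (s ^ k)⁻¹ : G) : G ⧸ P1) = 1 := by
        have : ((g * (s ^ k)⁻¹ : G) : G ⧸ P1)
            = ((g : G) : G ⧸ P1) * ((((s : G) : G ⧸ P1)) ^ k)⁻¹ := by
          rw [QuotientGroup.mk_mul, QuotientGroup.mk_inv, QuotientGroup.mk_zpow]
        rw [this, hk]
        group
      exact (QuotientGroup.eq_one_iff _).mp h6
    have hMlcs : (⊤ : Subgroup G).lowerCentralSeries 1 ≤ φ.range := by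
      have hlcs1 : (⊤ : Subgroup G).lowerCentralSeries 1 = ⁅(⊤ : Subgroup G), ⊤⁆ := by
        rw [Subgroup.top_lowerCentralSeries_one]; rfl
      rw [hlcs1]
      refine Subgroup.commutator_le.mpr ?_
      intro g _ h _
      obtain ⟨a, ha, k, rfl⟩ := hdec g
      obtain ⟨b, hb, l, rfl⟩ := hdec h
      have hmem1 : ∀ c : G, c ∈ P1 →
          Commute ((c : G) : G ⧸ φ.range) ((s : G) : G ⧸ φ.range) := by
        intro c hc
        rw [← commutatorElement_eq_one_iff_commute]
        have : ((⁅c, s⁆ : G) : G ⧸ φ.range) = 1 :=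
          (QuotientGroup.eq_one_iff _).mpr ⟨⟨c, hc⟩, rfl⟩
        rw [← this]
        rfl
      have hmem2 : Commute ((a : G) : G ⧸ φ.range) ((b : G) : G ⧸ φ.range) := by
        unfold Commute SemiconjBy
        rw [← QuotientGroup.mk_mul, ← QuotientGroup.mk_mul, hcomm a b ha hb]
      have hcom : Commute ((a * s ^ k : G) : G ⧸ φ.range)
          ((b * s ^ l : G) : G ⧸ φ.range) := by
        rw [QuotientGroup.mk_mul, QuotientGroup.mk_mul, QuotientGroup.mk_zpow,
          QuotientGroup.mk_zpow]
        exact Commute.mul_left (hmem2.mul_right ((hmem1 a ha).zpow_right l))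
          (((hmem1 b hb).symm.zpow_left k).mul_right
            (Commute.zpow_zpow_self _ k l))
      rw [← QuotientGroup.eq_one_iff (⁅a * s ^ k, b * s ^ l⁆ : G)]
      have h8 := map_commutatorElement (QuotientGroup.mk' φ.range) (a * s ^ k) (b * s ^ l)
      show (QuotientGroup.mk' φ.range) _ = 1
      rw [h8]
      exact commutatorElement_eq_one_iff_commute.mpr hcom
    have hMlb : p ^ (m - 2) ≤ Nat.card φ.range := by
      have h1 := lcs_card_lb p hp hpg (m - 2) 1 (by rw [hclass]; omega)
      have h2 : Nat.card ((⊤ : Subgroup G).lowerCentralSeries 1) ≤ Nat.card φ.range :=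
        Subgroup.card_le_of_le hMlcs
      exact le_trans (Nat.le_of_dvd Nat.card_pos h1) h2
    have hkercard : Nat.card φ.ker = Nat.card (Subgroup.center G) := by
      have hker1 : ∀ x : φ.ker, (x.1.1 : G) ∈ Subgroup.center G := by
        intro x
        refine hcentral x.1.1 x.1.2 ?_
        have hk : φ x.1 = 1 := x.2
        exact commutatorElement_eq_one_iff_commute.mp hk
      have hker2 : ∀ y : Subgroup.center G, (⟨y.1, hZA y.2⟩ : P1) ∈ φ.ker := by
        intro y
        show φ _ = 1
        refine commutatorElement_eq_one_iff_commute.mpr ?_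
        exact (Subgroup.mem_center_iff.mp y.2 s).symm
      exact Nat.card_congr
        { toFun := fun x => ⟨x.1.1, hker1 x⟩
          invFun := fun y => ⟨⟨y.1, hZA y.2⟩, hker2 y⟩
          left_inv := fun x => rfl
          right_inv := fun y => rfl }
    have hrange : Nat.card P1 = Nat.card φ.range * Nat.card φ.ker := by
      have h1 := Subgroup.card_eq_card_quotient_mul_card_subgroup φ.ker
      have h2 : Nat.card (P1 ⧸ φ.ker) = Nat.card φ.range :=
        Nat.card_congr (QuotientGroup.quotientKerEquivRange φ).toEquiv
      rw [h2] at h1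
      exact h1
    have hzp : p ≤ Nat.card (Subgroup.center G) := Nat.le_of_dvd (by omega) hpZ
    have heq : p ^ (m - 2) * p = Nat.card φ.range * Nat.card (Subgroup.center G) := by
      rw [← hkercard, ← hrange, hAcard, ← pow_succ]
      congr 1; omega
    have hcMa : Nat.card φ.range = p ^ (m - 2) := by
      have l1 : p ^ (m - 2) * p ≤ Nat.card φ.range * p := Nat.mul_le_mul_right p hMlb
      have l2 : Nat.card φ.range * p ≤ Nat.card φ.range * Nat.card (Subgroup.center G) :=
        Nat.mul_le_mul_left _ hzp
      have l3 : Nat.card φ.range * p = p ^ (m - 2) * p :=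
        le_antisymm (l2.trans_eq heq.symm) l1
      exact Nat.eq_of_mul_eq_mul_right hp.pos l3
    have hz : Nat.card (Subgroup.center G) = p := by
      rw [hcMa] at heq
      exact (Nat.eq_of_mul_eq_mul_left (by positivity) heq).symm
    refine ⟨?_, hz⟩
    have hsC : s ∈ Subgroup.centralizer ({s} : Set G) := by
      rw [Subgroup.mem_centralizer_singleton_iff]
    have hZC : P1 ⊓ Subgroup.centralizer ({s} : Set G) = Subgroup.center G := by
      apply le_antisymm
      · rintro x ⟨hx1, hx2⟩
        exact hcentral x hx1 (Subgroup.mem_centralizer_singleton_iff.mp hx2)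
      · intro x hx
        exact ⟨hZA hx, Subgroup.center_le_centralizer _ hx⟩
    have hrelC : P1.relIndex (Subgroup.centralizer ({s} : Set G)) = p := by
      have hdvd : P1.relIndex (Subgroup.centralizer ({s} : Set G)) ∣ p :=
        hP1idx ▸ Subgroup.relIndex_dvd_index_of_normal P1 _
      rcases hp.eq_one_or_self_of_dvd _ hdvd with h | h
      · exact absurd (Subgroup.relIndex_eq_one.mp h hsC) hs
      · exact h
    have h1 := Subgroup.card_mul_index (P1.subgroupOf (Subgroup.centralizer ({s} : Set G)))
    have h2 : Nat.card (P1.subgroupOf (Subgroup.centralizer ({s} : Set G))) = p := by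
      calc Nat.card (P1.subgroupOf (Subgroup.centralizer ({s} : Set G)))
          = Nat.card ((P1 ⊓ Subgroup.centralizer ({s} : Set G)).subgroupOf
            (Subgroup.centralizer ({s} : Set G))) := by
            rw [Subgroup.inf_subgroupOf_right]
        _ = Nat.card (P1 ⊓ Subgroup.centralizer ({s} : Set G) : Subgroup G) :=
            Nat.card_congr (Subgroup.subgroupOfEquivOfLe inf_le_right).toEquiv
        _ = p := by rw [hZC, hz]
    rw [h2] at h1
    have h3 : (P1.subgroupOf (Subgroup.centralizer ({s} : Set G))).index = p := hrelC
    rw [h3] at h1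
    rw [← h1]
    ring

  -- existence of an element outside P1
  have hP1ne : P1 ≠ ⊤ := by
    intro h
    rw [h, Subgroup.index_top] at hP1idx
    omega
  obtain ⟨s₀, hs₀⟩ : ∃ s : G, s ∉ P1 := by
    by_contra h
    push_neg at h
    exact hP1ne ((Subgroup.eq_top_iff' P1).mpr h)
  have hz : Nat.card (Subgroup.center G) = p := (key s₀ hs₀).2
  -- centralizer cardinalities in the three cases
  have htopcase : ∀ g : G, g ∈ Subgroup.center G →
      Nat.card (Subgroup.centralizer ({g} : Set G)) = p ^ m := by
    intro g hg
    have htop : Subgroup.centralizer ({g} : Set G) = ⊤ := by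
      rw [Subgroup.centralizer_eq_top_iff_subset]
      intro t ht
      rw [Set.mem_singleton_iff] at ht
      rw [ht]
      exact hg
    rw [htop, Subgroup.card_top, hG]
  have hmsplit : p ^ m = p ^ (m - 1) * p := by rw [← pow_succ]; congr 1; omega
  have hmid : ∀ g : G, g ∈ P1 → g ∉ Subgroup.center G →
      Nat.card (Subgroup.centralizer ({g} : Set G)) = p ^ (m - 1) := by
    intro g hg hgz
    have hle : P1 ≤ Subgroup.centralizer ({g} : Set G) := by
      intro b hb
      rw [Subgroup.mem_centralizer_singleton_iff]
      exact hcomm b g hb hg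
    have hdvd : (Subgroup.centralizer ({g} : Set G)).index ∣ p :=
      hP1idx ▸ Subgroup.index_dvd_of_le hle
    rcases hp.eq_one_or_self_of_dvd _ hdvd with h | h
    · exfalso
      apply hgz
      rw [Subgroup.mem_center_iff]
      intro h'
      have h2 : h' ∈ Subgroup.centralizer ({g} : Set G) :=
        (Subgroup.index_eq_one.mp h) ▸ Subgroup.mem_top h'
      exact Subgroup.mem_centralizer_singleton_iff.mp h2
    · have h1 := Subgroup.card_mul_index (Subgroup.centralizer ({g} : Set G))
      rw [h, hG, hmsplit] at h1
      exact Nat.eq_of_mul_eq_mul_right hp.pos h1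
  -- sum of centralizer cardinalities = number of commuting pairs
  cases nonempty_fintype G
  have hburn := card_comm_eq_card_conjClasses_mul_card G
  have hsum : Nat.card { q : G × G // Commute q.1 q.2 }
      = ∑ g : G, Nat.card (Subgroup.centralizer ({g} : Set G)) := by
    rw [Nat.card_congr (Equiv.subtypeProdEquivSigmaSubtype (fun a b : G => Commute a b))]
    rw [Nat.card_eq_fintype_card, Fintype.card_sigma]
    refine Finset.sum_congr rfl ?_
    intro g _
    rw [← Nat.card_eq_fintype_card]
    apply Nat.card_congr
    exact Equiv.subtypeEquivRight (fun h => by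
      rw [Subgroup.mem_centralizer_singleton_iff]
      exact ⟨fun hc => hc.symm, fun hc => hc.symm⟩)
  -- split the sum over the three regions
  set f : G → ℕ := fun g => Nat.card (Subgroup.centralizer ({g} : Set G)) with hf
  have hZfin : (Finset.univ.filter (fun g : G => g ∈ Subgroup.center G)).card = p := by
    have h1 : Nat.card {g : G // g ∈ Subgroup.center G} = p := hz
    rw [Nat.card_eq_fintype_card, Fintype.card_subtype] at h1
    exact h1
  have hAfin : (Finset.univ.filter (fun g : G => g ∈ P1)).card = p ^ (m - 1) := by
    have h1 : Nat.card {g : G // g ∈ P1} = p ^ (m - 1) := hAcard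
    rw [Nat.card_eq_fintype_card, Fintype.card_subtype] at h1
    exact h1
  have huniv : (Finset.univ : Finset G).card = p ^ m := by
    rw [Finset.card_univ, ← Nat.card_eq_fintype_card, hG]
  have hff : (Finset.univ.filter (fun g : G => g ∈ P1)).filter
      (fun g => g ∈ Subgroup.center G)
      = Finset.univ.filter (fun g : G => g ∈ Subgroup.center G) := by
    ext g
    simp only [Finset.mem_filter, Finset.mem_univ, true_and]
    exact ⟨fun h => h.2, fun h => ⟨hZA h, h⟩⟩
  have hsplit1 : ∑ g : G, f g
      = ∑ g ∈ Finset.univ.filter (fun g : G => g ∈ P1), f g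
        + ∑ g ∈ Finset.univ.filter (fun g : G => g ∉ P1), f g :=
    (Finset.sum_filter_add_sum_filter_not _ _ _).symm
  have hsplit2 : ∑ g ∈ Finset.univ.filter (fun g : G => g ∈ P1), f g
      = ∑ g ∈ (Finset.univ.filter (fun g : G => g ∈ P1)).filter
          (fun g => g ∈ Subgroup.center G), f g
        + ∑ g ∈ (Finset.univ.filter (fun g : G => g ∈ P1)).filter
          (fun g => g ∉ Subgroup.center G), f g :=
    (Finset.sum_filter_add_sum_filter_not _ _ _).symm
  have hc1 : ∑ g ∈ (Finset.univ.filter (fun g : G => g ∈ P1)).filter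
      (fun g => g ∈ Subgroup.center G), f g = p * p ^ m := by
    rw [hff]
    rw [Finset.sum_congr rfl (fun g hg => ?_), Finset.sum_const, hZfin, smul_eq_mul]
    rw [Finset.mem_filter] at hg
    exact htopcase g hg.2
  have hcard2 : ((Finset.univ.filter (fun g : G => g ∈ P1)).filter
      (fun g => g ∉ Subgroup.center G)).card = p ^ (m - 1) - p := by
    have h1 := Finset.card_filter_add_card_filter_not
      (s := Finset.univ.filter (fun g : G => g ∈ P1))
      (p := fun g => g ∈ Subgroup.center G)
    rw [hff, hZfin, hAfin] at h1
    omega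
  have hc2 : ∑ g ∈ (Finset.univ.filter (fun g : G => g ∈ P1)).filter
      (fun g => g ∉ Subgroup.center G), f g = (p ^ (m - 1) - p) * p ^ (m - 1) := by
    rw [Finset.sum_congr rfl (fun g hg => ?_), Finset.sum_const, hcard2, smul_eq_mul]
    rw [Finset.mem_filter, Finset.mem_filter] at hg
    exact hmid g hg.1.2 hg.2
  have hcard3 : (Finset.univ.filter (fun g : G => g ∉ P1)).card = p ^ m - p ^ (m - 1) := by
    have h1 := Finset.card_filter_add_card_filter_not
      (s := (Finset.univ : Finset G))
      (p := fun g => g ∈ P1)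
    rw [hAfin, huniv] at h1
    omega
  have hc3 : ∑ g ∈ Finset.univ.filter (fun g : G => g ∉ P1), f g
      = (p ^ m - p ^ (m - 1)) * p ^ 2 := by
    rw [Finset.sum_congr rfl (fun g hg => ?_), Finset.sum_const, hcard3, smul_eq_mul]
    rw [Finset.mem_filter] at hg
    exact (key g hg.2).1
  have htotal : Nat.card (ConjClasses G) * p ^ m
      = p * p ^ m + (p ^ (m - 1) - p) * p ^ (m - 1) + (p ^ m - p ^ (m - 1)) * p ^ 2 := by
    rw [hG] at hburn
    rw [← hburn, hsum, hsplit1, hsplit2, hc1, hc2, hc3]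
  -- final arithmetic
  have ha1 : 1 ≤ p ^ (m - 2) := Nat.one_le_pow _ _ hp.pos
  have hpm1 : p ^ (m - 1) = p ^ (m - 2) * p := by rw [← pow_succ]; congr 1; omega
  have hpm : p ^ m = p ^ (m - 2) * p ^ 2 := by rw [← pow_add]; congr 1; omega
  rw [hpm1, hpm] at htotal
  have hgoal : Nat.card (ConjClasses G) * (p ^ (m - 2) * p ^ 2)
      = (p ^ (m - 2) + p ^ 2 - 1) * (p ^ (m - 2) * p ^ 2) := by
    rw [htotal]
    have hle1 : p ≤ p ^ (m - 2) * p := Nat.le_mul_of_pos_left p (by omega)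
    have hle2 : p ^ (m - 2) * p ≤ p ^ (m - 2) * p ^ 2 := by
      apply Nat.mul_le_mul_left
      calc p = p ^ 1 := (pow_one p).symm
        _ ≤ p ^ 2 := Nat.pow_le_pow_right hp.pos (by omega)
    have hle3 : 1 ≤ p ^ (m - 2) + p ^ 2 := by omega
    zify [hle1, hle2, hle3]
    ring
  exact Nat.eq_of_mul_eq_mul_right (by positivity) hgoal
end

section
/- Let G be an extraspecial p-group of order p^5. Then α_{G,n} = (1/p^5)(p · p^{5n} + (p^5 − p) · p^{4n}) for all n ≥ 0. -/
open MulAction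
open scoped commutatorElement

/-- Auxiliary: the quotient by simultaneous conjugation is the orbit quotient of the
conjugation action of `ConjAct G` on `Fin n → G`. -/
def auxQuotEquiv (G : Type*) [Group G] (n : ℕ) :
    Quot (simulConjRel G n) ≃ orbitRel.Quotient (ConjAct G) (Fin n → G) :=
  Quot.congr (Equiv.refl _) (by
    intro a b
    show simulConjRel G n a b ↔ a ∈ orbit (ConjAct G) b
    rw [mem_orbit_iff]
    constructor
    · rintro ⟨g, hg⟩
      refine ⟨ConjAct.toConjAct g⁻¹, funext fun i => ?_⟩
      simp only [Pi.smul_apply, ConjAct.smul_def, ConjAct.ofConjAct_toConjAct]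
      rw [← hg i]
      group
    · rintro ⟨g, hg⟩
      refine ⟨(ConjAct.ofConjAct g)⁻¹, fun i => ?_⟩
      have := congrFun hg i
      simp only [Pi.smul_apply, ConjAct.smul_def] at this
      rw [← this]
      group)

/-- Auxiliary: fixed points of `g` on `n`-tuples are tuples of centralizer elements. -/
lemma aux_fixedBy_card (G : Type*) [Group G] [Finite G] (n : ℕ) (g : ConjAct G) :
    Nat.card (fixedBy (Fin n → G) g) =
      Nat.card (Subgroup.centralizer {ConjAct.ofConjAct g}) ^ n := by
  have e1 : fixedBy (Fin n → G) g ≃ (Fin n → Subgroup.centralizer {ConjAct.ofConjAct g}) := by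
    refine ⟨fun x i => ⟨x.1 i, ?_⟩, fun y => ⟨fun i => (y i).1, ?_⟩, fun x => ?_, fun y => ?_⟩
    · rw [Subgroup.mem_centralizer_iff]
      intro m hm
      rw [Set.mem_singleton_iff] at hm
      rw [hm]
      have := congrFun x.2 i
      simp only [Pi.smul_apply, ConjAct.smul_def] at this
      rw [mul_inv_eq_iff_eq_mul] at this
      exact this
    · show g • _ = _
      funext i
      simp only [Pi.smul_apply, ConjAct.smul_def]
      rw [mul_inv_eq_iff_eq_mul]
      exact Subgroup.mem_centralizer_iff.mp (y i).2 _ rfl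
    · rfl
    · rfl
  rw [Nat.card_congr e1, Nat.card_fun]
  simp

/-- Auxiliary: the centralizer of a central element is everything. -/
lemma aux_centralizer_central (G : Type*) [Group G] (u : G) (hu : u ∈ Subgroup.center G) :
    Subgroup.centralizer {u} = ⊤ := by
  ext x
  simp only [Subgroup.mem_centralizer_iff, Set.mem_singleton_iff, forall_eq, Subgroup.mem_top,
    iff_true]
  exact (Subgroup.mem_center_iff.mp hu x).symm

/-- Auxiliary: in an extraspecial group of order `p^5`, the centralizer of a
noncentral element has order `p^4`. -/
lemma aux_centralizer_card_s14 (p : ℕ) [Fact p.Prime] (G : Type*) [Group G] [Finite G]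
    (hG : Nat.card G = p ^ 5)
    (hZC : Subgroup.center G = commutator G)
    (hZcard : Nat.card (Subgroup.center G) = p)
    (u : G) (hu : u ∉ Subgroup.center G) :
    Nat.card (Subgroup.centralizer {u}) = p ^ 4 := by
  have hp := (Fact.out : p.Prime)
  have hmem : ∀ x : G, ⁅x, u⁆ ∈ Subgroup.center G := by
    intro x
    rw [hZC]
    exact Subgroup.commutator_mem_commutator (Subgroup.mem_top x) (Subgroup.mem_top u)
  have key : ∀ x y : G, ⁅x * y, u⁆ = ⁅x, u⁆ * ⁅y, u⁆ := by
    intro x y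
    have hc := (Subgroup.mem_center_iff.mp (hmem y))
    calc ⁅x * y, u⁆ = (x * ⁅y, u⁆ * x⁻¹) * ⁅x, u⁆ := by group
      _ = ⁅y, u⁆ * ⁅x, u⁆ := by rw [hc x]; simp [mul_assoc]
      _ = ⁅x, u⁆ * ⁅y, u⁆ := (hc ⁅x, u⁆).symm
  let f : G →* Subgroup.center G :=
    { toFun := fun x => ⟨⁅x, u⁆, hmem x⟩
      map_one' := by ext; simp
      map_mul' := fun x y => by ext; exact key x y }
  have hker : f.ker = Subgroup.centralizer {u} := by
    ext x
    simp only [MonoidHom.mem_ker, Subgroup.mem_centralizer_iff, Set.mem_singleton_iff,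
      forall_eq]
    constructor
    · intro h
      have : ⁅x, u⁆ = 1 := congrArg Subtype.val h
      exact (commutatorElement_eq_one_iff_commute.mp this).symm.eq
    · intro h
      ext
      exact commutatorElement_eq_one_iff_commute.mpr h.symm
  have hrange : Nat.card f.range = p := by
    have hdvd : Nat.card f.range ∣ p := hZcard ▸ Subgroup.card_subgroup_dvd_card f.range
    have hne : Nat.card f.range ≠ 1 := by
      intro h1
      apply hu
      rw [Subgroup.mem_center_iff]
      intro g
      have hfg : f g ∈ f.range := ⟨g, rfl⟩
      rw [Subgroup.card_eq_one.mp h1, Subgroup.mem_bot] at hfg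
      have : ⁅g, u⁆ = 1 := congrArg Subtype.val hfg
      exact (commutatorElement_eq_one_iff_commute.mp this).eq
    exact ((Nat.Prime.eq_one_or_self_of_dvd hp _ hdvd).resolve_left hne)
  have hcard : Nat.card G = Nat.card (G ⧸ f.ker) * Nat.card f.ker :=
    Subgroup.card_eq_card_quotient_mul_card_subgroup f.ker
  have hq : Nat.card (G ⧸ f.ker) = p := by
    rw [Nat.card_congr (QuotientGroup.quotientKerEquivRange f).toEquiv, hrange]
  rw [hG, hq, hker] at hcard
  have : p * Nat.card (Subgroup.centralizer {u}) = p * p ^ 4 := by rw [← hcard]; ring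
  exact Nat.eq_of_mul_eq_mul_left hp.pos this

theorem stmt_14 (p : ℕ) [Fact p.Prime] (G : Type*) [Group G] [Finite G]
    (hG : Nat.card G = p ^ 5)
    (hZC : Subgroup.center G = commutator G)
    (hZF : Subgroup.center G = frattini G)
    (hZcard : Nat.card (Subgroup.center G) = p) :
    ∀ n : ℕ,
      (alphaCount G n : ℚ) =
        (1 / (p : ℚ) ^ 5) *
          ((p : ℚ) * (p : ℚ) ^ (5 * n) + ((p : ℚ) ^ 5 - (p : ℚ)) * (p : ℚ) ^ (4 * n)) := by
  intro n
  classical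
  have hp := (Fact.out : p.Prime)
  have : Fintype G := Fintype.ofFinite G
  have : Fintype (ConjAct G) := Fintype.ofFinite _
  have : Fintype (orbitRel.Quotient (ConjAct G) (Fin n → G)) := Fintype.ofFinite _
  have instfix : ∀ a : ConjAct G, Fintype (fixedBy (Fin n → G) a) := fun a => Fintype.ofFinite _
  -- Burnside
  have hB := MulAction.sum_card_fixedBy_eq_card_orbits_mul_card_group (ConjAct G) (Fin n → G)
  -- identify alphaCount with the number of orbits
  have hα : alphaCount G n = Fintype.card (orbitRel.Quotient (ConjAct G) (Fin n → G)) := by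
    rw [alphaCount, Nat.card_congr (auxQuotEquiv G n), Nat.card_eq_fintype_card]
  -- compute the sum
  have hsum : (∑ a : ConjAct G, Fintype.card (fixedBy (Fin n → G) a)) =
      p * (p ^ 5) ^ n + (p ^ 5 - p) * (p ^ 4) ^ n := by
    have hterm : ∀ a : ConjAct G, Fintype.card (fixedBy (Fin n → G) a) =
        if ConjAct.ofConjAct a ∈ Subgroup.center G then (p ^ 5) ^ n else (p ^ 4) ^ n := by
      intro a
      rw [← Nat.card_eq_fintype_card, aux_fixedBy_card]
      by_cases h : ConjAct.ofConjAct a ∈ Subgroup.center G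
      · rw [if_pos h, aux_centralizer_central G _ h]
        rw [show Nat.card (⊤ : Subgroup G) = Nat.card G from Nat.card_congr Subgroup.topEquiv.toEquiv, hG]
      · rw [if_neg h, aux_centralizer_card_s14 p G hG hZC hZcard _ h]
    rw [Finset.sum_congr rfl (fun a _ => hterm a)]
    rw [Finset.sum_ite, Finset.sum_const, Finset.sum_const, smul_eq_mul, smul_eq_mul]
    have e : ConjAct G ≃ G := ConjAct.ofConjAct.toEquiv
    have h1 : (Finset.univ.filter
        (fun a : ConjAct G => ConjAct.ofConjAct a ∈ Subgroup.center G)).card = p := by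
      rw [← hZcard, Nat.card_eq_fintype_card, Fintype.card_subtype]
      exact (Finset.card_nbij (fun a : ConjAct G => ConjAct.ofConjAct a)
        (by intro a ha; simpa using (Finset.mem_filter.mp ha).2)
        (fun a ha b hb hab => ConjAct.ofConjAct.injective hab)
        (by
          intro u hu
          have hu' : u ∈ Subgroup.center G := by simpa using hu
          exact ⟨ConjAct.toConjAct u, by simpa [ConjAct.ofConjAct_toConjAct] using hu', rfl⟩))
    have h2 : (Finset.univ.filter
        (fun a : ConjAct G => ¬ ConjAct.ofConjAct a ∈ Subgroup.center G)).card = p ^ 5 - p := by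
      have := Finset.card_filter_add_card_filter_not (s := (Finset.univ : Finset (ConjAct G)))
        (p := fun a : ConjAct G => ConjAct.ofConjAct a ∈ Subgroup.center G)
      rw [h1] at this
      have hcardG : (Finset.univ : Finset (ConjAct G)).card = p ^ 5 := by
        rw [Finset.card_univ, ← Nat.card_eq_fintype_card, Nat.card_congr e, hG]
      omega
    rw [h1, h2]
  rw [hsum, ← hα] at hB
  -- now transfer to ℚ
  have hple : p ≤ p ^ 5 := Nat.le_self_pow (by norm_num) p
  have hpQ : (p : ℚ) ≠ 0 := Nat.cast_ne_zero.mpr hp.ne_zero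
  have hcast : (alphaCount G n : ℚ) * (p : ℚ) ^ 5 =
      (p : ℚ) * (p : ℚ) ^ (5 * n) + ((p : ℚ) ^ 5 - (p : ℚ)) * (p : ℚ) ^ (4 * n) := by
    have hG' : Fintype.card (ConjAct G) = p ^ 5 := by
      rw [← Nat.card_eq_fintype_card, Nat.card_congr (ConjAct.ofConjAct.toEquiv : ConjAct G ≃ G), hG]
    have := hB
    rw [hG'] at this
    have := congrArg (fun m : ℕ => (m : ℚ)) this
    push_cast [Nat.cast_sub hple] at this
    rw [← this, pow_mul, pow_mul]
  rw [← hcast]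
  field_simp
end

section
/- Let D_{2n} be the dihedral group of order 2n with n even. Then α_{D_{2n},k} = (1/(2n))(2·(2n)^k + n·4^k + (n−2)·n^k) for all k ≥ 0. -/
open MulAction DihedralGroup

section Aux

lemma two_mul_eq_zero_iff' {n : ℕ} [NeZero n] (hn : Even n) (i : ZMod n) :
    2 * i = 0 ↔ i = 0 ∨ i = ((n / 2 : ℕ) : ZMod n) := by
  obtain ⟨m, hm⟩ := hn
  have hn2 : n / 2 = m := by omega
  constructor
  · intro h
    have hv : (((2 * i.val : ℕ)) : ZMod n) = 0 := by
      push_cast [ZMod.natCast_val, ZMod.cast_id]; linear_combination h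
    rw [ZMod.natCast_eq_zero_iff] at hv
    have hlt := ZMod.val_lt i
    obtain ⟨c, hc⟩ := hv
    have hval : i.val = m * c := by
      have h2 : 2 * i.val = 2 * (m * c) := by rw [hc, hm]; ring
      exact Nat.eq_of_mul_eq_mul_left (by norm_num) h2
    have hlt' : m * c < m * 2 := by
      rw [← hval]; omega
    have hc2 : c < 2 := Nat.lt_of_mul_lt_mul_left hlt'
    interval_cases c
    · left; rw [← ZMod.natCast_zmod_val i, hval]; simp
    · right; rw [← ZMod.natCast_zmod_val i, hval, hn2, Nat.mul_one]
  · rintro (rfl | rfl)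
    · ring
    · rw [← Nat.cast_ofNat, ← Nat.cast_mul, hn2]
      have h2 : 2 * m = n := by omega
      rw [h2, ZMod.natCast_self]

lemma card_two_torsion' {n : ℕ} [NeZero n] (hn : Even n) (h4 : 4 ≤ n) :
    Fintype.card {i : ZMod n // 2 * i = 0} = 2 := by
  have hne : ((n / 2 : ℕ) : ZMod n) ≠ 0 := by
    intro h
    rw [ZMod.natCast_eq_zero_iff] at h
    have := Nat.le_of_dvd (by omega) h
    omega
  rw [Fintype.card_subtype]
  have : (Finset.univ.filter fun i : ZMod n => 2 * i = 0)
      = {0, ((n / 2 : ℕ) : ZMod n)} := by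
    ext i
    simp [two_mul_eq_zero_iff' hn]
  rw [this, Finset.card_pair (Ne.symm hne)]

/-- The equivalence between `ZMod n ⊕ ZMod n` and `DihedralGroup n`. -/
def dihedralSumEquiv (n : ℕ) : (ZMod n) ⊕ (ZMod n) ≃ DihedralGroup n where
  toFun i := match i with
    | Sum.inl j => r j
    | Sum.inr j => sr j
  invFun i := match i with
    | r j => Sum.inl j
    | sr j => Sum.inr j
  left_inv := by rintro (x | x) <;> rfl
  right_inv := by rintro (x | x) <;> rfl

/-- Splitting a centralizer-type subtype of the dihedral group. -/
noncomputable def commSplit (n : ℕ) [NeZero n] (g : DihedralGroup n) :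
    {x : DihedralGroup n // g * x = x * g} ≃
      ({j : ZMod n // g * r j = r j * g} ⊕ {j : ZMod n // g * sr j = sr j * g}) :=
  (((dihedralSumEquiv n).subtypeEquiv (q := fun x => g * x = x * g)
      (p := fun s => g * (dihedralSumEquiv n s) = (dihedralSumEquiv n s) * g)
      (fun _ => Iff.rfl)).symm).trans
    (Equiv.subtypeSum (p := fun s => g * (dihedralSumEquiv n s) = (dihedralSumEquiv n s) * g))

lemma comm_r_r' (n : ℕ) (i j : ZMod n) : r i * r j = r j * r i := by
  rw [r_mul_r, r_mul_r, add_comm]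

lemma comm_r_sr_iff' (n : ℕ) (i j : ZMod n) : r i * sr j = sr j * r i ↔ 2 * i = 0 := by
  rw [r_mul_sr, sr_mul_r, sr.injEq]
  constructor <;> intro h <;> linear_combination -h

lemma comm_sr_r_iff' (n : ℕ) (i j : ZMod n) : sr i * r j = r j * sr i ↔ 2 * j = 0 := by
  rw [sr_mul_r, r_mul_sr, sr.injEq]
  constructor <;> intro h <;> linear_combination h

lemma comm_sr_sr_iff' (n : ℕ) (i j : ZMod n) :
    sr i * sr j = sr j * sr i ↔ 2 * (j - i) = 0 := by
  rw [sr_mul_sr, sr_mul_sr, r.injEq]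
  constructor <;> intro h <;> linear_combination h

lemma card_comm_r_central' (n : ℕ) [NeZero n] (i : ZMod n) (h : 2 * i = 0) :
    Fintype.card {x : DihedralGroup n // r i * x = x * r i} = 2 * n := by
  rw [← DihedralGroup.card (n := n)]
  apply Fintype.card_congr
  apply Equiv.subtypeUnivEquiv
  intro x
  cases x with
  | r j => exact comm_r_r' n i j
  | sr j => exact (comm_r_sr_iff' n i j).mpr h

lemma card_comm_r_noncentral' (n : ℕ) [NeZero n] (i : ZMod n) (h : ¬ 2 * i = 0) :
    Fintype.card {x : DihedralGroup n // r i * x = x * r i} = n := by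
  rw [Fintype.card_congr (commSplit n (r i)), Fintype.card_sum]
  have h1 : Fintype.card {j : ZMod n // r i * r j = r j * r i} = n := by
    rw [Fintype.card_congr (Equiv.subtypeUnivEquiv fun j => comm_r_r' n i j), ZMod.card]
  have h2 : Fintype.card {j : ZMod n // r i * sr j = sr j * r i} = 0 := by
    rw [Fintype.card_eq_zero_iff]
    exact ⟨fun ⟨j, hj⟩ => h ((comm_r_sr_iff' n i j).mp hj)⟩
  rw [h1, h2]
  omega

lemma card_comm_sr' (n : ℕ) [NeZero n] (hn : Even n) (h4 : 4 ≤ n) (i : ZMod n) :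
    Fintype.card {x : DihedralGroup n // sr i * x = x * sr i} = 4 := by
  have hcard2 := card_two_torsion' (n := n) hn h4
  rw [Fintype.card_congr (commSplit n (sr i)), Fintype.card_sum]
  have h1 : Fintype.card {j : ZMod n // sr i * r j = r j * sr i} = 2 := by
    rw [Fintype.card_congr (Equiv.subtypeEquivRight (comm_sr_r_iff' n i)), hcard2]
  have h2 : Fintype.card {j : ZMod n // sr i * sr j = sr j * sr i} = 2 := by
    have e1 : {j : ZMod n // sr i * sr j = sr j * sr i} ≃ {j : ZMod n // 2 * j = 0} :=
      (Equiv.subtypeEquivRight (comm_sr_sr_iff' n i)).trans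
        ((Equiv.subRight i).subtypeEquiv (fun j => by simp [Equiv.subRight]))
    rw [Fintype.card_congr e1, hcard2]
  rw [h1, h2]

noncomputable def alphaQuotEquiv (G : Type*) [Group G] (k : ℕ) :
    Quot (simulConjRel G k) ≃ orbitRel.Quotient (ConjAct G) (Fin k → G) := by
  apply Quot.congr (Equiv.refl _)
  intro x y
  simp only [Equiv.refl_apply]
  change simulConjRel G k x y ↔ orbitRel (ConjAct G) (Fin k → G) x y
  rw [orbitRel_apply, mem_orbit_iff]
  constructor
  · rintro ⟨g, hg⟩
    refine ⟨ConjAct.toConjAct g⁻¹, funext fun i => ?_⟩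
    simp only [Pi.smul_apply, ConjAct.smul_def, ConjAct.ofConjAct_toConjAct, ← hg i]
    group
  · rintro ⟨g, hg⟩
    refine ⟨(ConjAct.ofConjAct g)⁻¹, fun i => ?_⟩
    rw [← hg]
    simp only [Pi.smul_apply, ConjAct.smul_def]
    group

lemma card_fixedBy_eq (G : Type*) [Group G] [Fintype G] [DecidableEq G] (k : ℕ)
    (g : ConjAct G) :
    Fintype.card (fixedBy (Fin k → G) g) =
      Fintype.card {x : G // ConjAct.ofConjAct g * x = x * ConjAct.ofConjAct g} ^ k := by
  have hfun : Fintype.card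
      (Fin k → {x : G // ConjAct.ofConjAct g * x = x * ConjAct.ofConjAct g}) =
      Fintype.card {x : G // ConjAct.ofConjAct g * x = x * ConjAct.ofConjAct g} ^ k := by
    simp
  rw [← hfun]
  apply Fintype.card_congr
  have e1 : (fixedBy (Fin k → G) g) ≃
      {x : Fin k → G // ∀ i, ConjAct.ofConjAct g * x i = x i * ConjAct.ofConjAct g} := by
    apply Equiv.subtypeEquivRight
    intro x
    rw [mem_fixedBy, funext_iff]
    apply forall_congr'
    intro i
    rw [Pi.smul_apply, ConjAct.smul_def, mul_inv_eq_iff_eq_mul]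
  exact e1.trans (Equiv.subtypePiEquivPi
    (p := fun _ x => ConjAct.ofConjAct g * x = x * ConjAct.ofConjAct g))

lemma sum_card_fixedBy (n k : ℕ) [NeZero n] (hn : Even n) (h4 : 4 ≤ n) :
    ∑ g : ConjAct (DihedralGroup n), Fintype.card (fixedBy (Fin k → DihedralGroup n) g)
      = 2 * (2 * n) ^ k + (n - 2) * n ^ k + n * 4 ^ k := by
  have step1 : ∑ g : ConjAct (DihedralGroup n),
      Fintype.card (fixedBy (Fin k → DihedralGroup n) g)
      = ∑ x : DihedralGroup n, Fintype.card {y : DihedralGroup n // x * y = y * x} ^ k := by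
    apply Fintype.sum_equiv ConjAct.ofConjAct.toEquiv
    intro g
    exact card_fixedBy_eq _ k g
  rw [step1]
  rw [← Equiv.sum_comp (dihedralSumEquiv n)
    (fun x : DihedralGroup n => Fintype.card {y : DihedralGroup n // x * y = y * x} ^ k),
    Fintype.sum_sum_type]
  have hsr : ∑ j : ZMod n,
      Fintype.card {y : DihedralGroup n // dihedralSumEquiv n (Sum.inr j) * y
        = y * dihedralSumEquiv n (Sum.inr j)} ^ k = n * 4 ^ k := by
    have : ∀ j : ZMod n,
        Fintype.card {y : DihedralGroup n // dihedralSumEquiv n (Sum.inr j) * y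
          = y * dihedralSumEquiv n (Sum.inr j)} ^ k = 4 ^ k := by
      intro j
      rw [show dihedralSumEquiv n (Sum.inr j) = sr j from rfl, card_comm_sr' n hn h4 j]
    rw [Finset.sum_congr rfl (fun j _ => this j), Finset.sum_const, Finset.card_univ,
      ZMod.card, smul_eq_mul]
  have hr : ∑ j : ZMod n,
      Fintype.card {y : DihedralGroup n // dihedralSumEquiv n (Sum.inl j) * y
        = y * dihedralSumEquiv n (Sum.inl j)} ^ k
      = 2 * (2 * n) ^ k + (n - 2) * n ^ k := by
    have hterm : ∀ j : ZMod n,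
        Fintype.card {y : DihedralGroup n // dihedralSumEquiv n (Sum.inl j) * y
          = y * dihedralSumEquiv n (Sum.inl j)} ^ k
        = if 2 * j = 0 then (2 * n) ^ k else n ^ k := by
      intro j
      rw [show dihedralSumEquiv n (Sum.inl j) = r j from rfl]
      split_ifs with h
      · rw [card_comm_r_central' n j h]
      · rw [card_comm_r_noncentral' n j h]
    rw [Finset.sum_congr rfl (fun j _ => hterm j), Finset.sum_ite, Finset.sum_const,
      Finset.sum_const]
    have hc1 : (Finset.univ.filter fun j : ZMod n => 2 * j = 0).card = 2 := by
      rw [← Fintype.card_subtype, card_two_torsion' hn h4]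
    have hc2 : (Finset.univ.filter fun j : ZMod n => ¬ 2 * j = 0).card = n - 2 := by
      have := Finset.card_filter_add_card_filter_not
        (s := (Finset.univ : Finset (ZMod n))) (p := fun j : ZMod n => 2 * j = 0)
      rw [Finset.card_univ, ZMod.card] at this
      omega
    rw [hc1, hc2, smul_eq_mul, smul_eq_mul]
  rw [hr, hsr]

end Aux

theorem stmt_16 (n : ℕ) (hn : Even n) (h4 : 4 ≤ n) (k : ℕ) :
    (alphaCount (DihedralGroup n) k : ℚ) =
      (1 / (2 * (n : ℚ))) *
        (2 * (2 * (n : ℚ)) ^ k + (n : ℚ) * 4 ^ k + ((n : ℚ) - 2) * (n : ℚ) ^ k) := by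
  haveI : NeZero n := ⟨by omega⟩
  have key : alphaCount (DihedralGroup n) k * (2 * n)
      = 2 * (2 * n) ^ k + (n - 2) * n ^ k + n * 4 ^ k := by
    rw [alphaCount, Nat.card_congr (alphaQuotEquiv (DihedralGroup n) k)]
    haveI : Fintype (orbitRel.Quotient (ConjAct (DihedralGroup n))
        (Fin k → DihedralGroup n)) := Fintype.ofFinite _
    rw [Nat.card_eq_fintype_card]
    have hb := MulAction.sum_card_fixedBy_eq_card_orbits_mul_card_group
      (ConjAct (DihedralGroup n)) (Fin k → DihedralGroup n)
    rw [sum_card_fixedBy n k hn h4, ConjAct.card, DihedralGroup.card] at hb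
    exact hb.symm
  have hn0 : (0 : ℚ) < (n : ℚ) := by positivity
  have h2n : (2 * (n : ℚ)) ≠ 0 := by positivity
  have keyQ : (alphaCount (DihedralGroup n) k : ℚ) * (2 * (n : ℚ))
      = 2 * (2 * (n : ℚ)) ^ k + ((n : ℚ) - 2) * (n : ℚ) ^ k + (n : ℚ) * 4 ^ k := by
    have := congrArg (fun m : ℕ => (m : ℚ)) key
    push_cast [Nat.cast_sub (by omega : 2 ≤ n)] at this
    linarith [this]
  field_simp
  linarith [keyQ]
end
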